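/- arXiv:2410.13967 — 6 statements merged into one kernel-verified Lean document; each statement's English description precedes it below -/
import Mathlib

section
/- For every natural number n and every r ∈ R, one has x^n·r = Σ_{w ∈ {σ,δ}^n} (w_1 ∘ w_2 ∘ ⋯ ∘ w_n)(r) · x^{s(w)}, where the sum runs over all words w = (w_1,…,w_n) of length n in the two letters σ and δ, and s(w) denotes the number of indices i with w_i = σ. Equivalently, x^n·r = Σ_{k=0}^{n} Σ_{f ∈ C_{n−k,k}} f(r)·x^{n−k}, where C_{n−k,k} is the set of all maps R → R obtained as compositions, in some order, of n−k copies of σ and k copies of δ. -/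
/-!
Commuting `x` past `r` once gives `σ r · x + δ r`; commuting `x^n` past `r` therefore
branches `n` times, each branch choosing `σ` (which raises the power of `x` kept on the
right by one) or `δ` (which does not). Induction on `n` peels off the outermost letter.
-/

open Finset

section Words

variable {R : Type*}

def wordOp (σ δ : R → R) {n : ℕ} (w : Fin n → Bool) : R → R :=
  (List.ofFn fun i => if w i then σ else δ).foldr (· ∘ ·) id

theorem wordOp_cons (σ δ : R → R) {n : ℕ} (b : Bool) (w : Fin n → Bool) :
    wordOp σ δ (Fin.cons b w : Fin (n + 1) → Bool) = (if b then σ else δ) ∘ wordOp σ δ w := by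
  simp only [wordOp, List.ofFn_succ, Fin.cons_zero, Fin.cons_succ, List.foldr_cons]

theorem count_true_ofFn_cons {n : ℕ} (b : Bool) (w : Fin n → Bool) :
    (List.ofFn (Fin.cons b w : Fin (n + 1) → Bool)).count true =
      (List.ofFn w).count true + if b then 1 else 0 := by
  cases b <;> simp [List.ofFn_succ]

end Words

theorem Fintype.sum_fin_succ_pi_bool {M : Type*} [AddCommMonoid M] {n : ℕ}
    (f : (Fin (n + 1) → Bool) → M) :
    ∑ w, f w = ∑ w : Fin n → Bool, (f (Fin.cons true w) + f (Fin.cons false w)) := by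
  rw [← (Fin.consEquiv fun _ => Bool).sum_comp, Fintype.sum_prod_type, Fintype.sum_bool,
    ← sum_add_distrib]
  rfl

section SkewCommutation

variable {R A : Type*} [Semiring A] {ι : R → A} {x : A} {σ δ : R → R}

theorem mul_mul_pow_of_mul_eq (hcomm : ∀ r, x * ι r = ι (σ r) * x + ι (δ r)) (r : R)
    (k : ℕ) : x * (ι r * x ^ k) = ι (σ r) * x ^ (k + 1) + ι (δ r) * x ^ k := by
  rw [← mul_assoc, hcomm, add_mul, mul_assoc, pow_succ']

theorem pow_mul_eq_sum_wordOp (hcomm : ∀ r, x * ι r = ι (σ r) * x + ι (δ r)) (n : ℕ)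
    (r : R) :
    x ^ n * ι r = ∑ w : Fin n → Bool, ι (wordOp σ δ w r) * x ^ (List.ofFn w).count true := by
  induction n with
  | zero => simp [wordOp]
  | succ n ih =>
    rw [Fintype.sum_fin_succ_pi_bool]
    simp only [wordOp_cons, count_true_ofFn_cons, Function.comp_apply, if_true]
    rw [pow_succ', mul_assoc, ih, mul_sum]
    exact sum_congr rfl fun w _ => mul_mul_pow_of_mul_eq hcomm _ _

end SkewCommutation

theorem skew_poly_pow_mul_eq_sum_words_general
    {R A : Type*} [Ring R] [Ring A] (ι : R →+* A)
    (x : A) (σ : R →+* R) (δ : R → R)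
    (hcomm : ∀ r : R, x * ι r = ι (σ r) * x + ι (δ r)) :
    ∀ (n : ℕ) (r : R),
      x ^ n * ι r =
        ∑ w : Fin n → Bool,
          ι (((List.ofFn fun i => if w i then (⇑σ : R → R) else δ).foldr (· ∘ ·) id) r) *
            x ^ ((List.ofFn w).count true) :=
  pow_mul_eq_sum_wordOp hcomm

/-- Let `A` be a ring containing `R` as a subring (via the injective
ring homomorphism `ι` sharing the identity), `x ∈ A`, `σ` a ring endomorphism of `R`
and `δ` a `σ`-derivation of `R` with `x·r = σ(r)·x + δ(r)` for all `r ∈ R`.  Then for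
every `n ∈ ℕ` and `r ∈ R`,
`x^n·r = Σ_{w ∈ {σ,δ}^n} (w_1 ∘ ⋯ ∘ w_n)(r) · x^{s(w)}`,
where the sum runs over all words `w` of length `n` in the letters `σ` (encoded `true`)
and `δ` (encoded `false`), and `s(w)` is the number of occurrences of `σ` in `w`. -/
theorem skew_poly_pow_mul_eq_sum_words
    {R A : Type*} [Ring R] [Ring A] (ι : R →+* A) (hι : Function.Injective ι)
    (x : A) (σ : R →+* R) (δ : R → R)
    (hδadd : ∀ r s : R, δ (r + s) = δ r + δ s)
    (hδmul : ∀ r s : R, δ (r * s) = σ r * δ s + δ r * s)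
    (hcomm : ∀ r : R, x * ι r = ι (σ r) * x + ι (δ r)) :
    ∀ (n : ℕ) (r : R),
      x ^ n * ι r =
        ∑ w : Fin n → Bool,
          ι (((List.ofFn fun i => if w i then (⇑σ : R → R) else δ).foldr (· ∘ ·) id) r) *
            x ^ ((List.ofFn w).count true) :=
  skew_poly_pow_mul_eq_sum_words_general ι x σ δ hcomm
end

section
/- The unique additive map σ̃ : A → A determined on the left R-module basis by σ̃(r·x^n) = σ(r)·x^n for all r ∈ R and n ∈ ℕ (so σ̃ fixes x and restricts to σ on R) is a ring automorphism of A. -/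
/-- Let `A = R[x; σ, δ]` be an Ore extension of automorphism type:
`A` contains `R` as a subring (via the injective ring homomorphism `ι` sharing the
identity), `σ` is a ring automorphism of `R`, `δ` is a `σ`-derivation commuting with
`σ`, `x·r = σ(r)·x + δ(r)` for all `r ∈ R`, and `A` is free as a left `R`-module with
basis `{x^n : n ∈ ℕ}` (i.e. the representation map `(ℕ →₀ R) → A` is bijective).
Then the unique additive map `σ̃ : A → A` determined on the basis by
`σ̃(r·x^n) = σ(r)·x^n` is a ring automorphism of `A`. -/
theorem skew_poly_extended_sigma_is_ring_automorphism
    {R A : Type*} [Ring R] [Ring A] (ι : R →+* A) (hι : Function.Injective ι)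
    (x : A) (σ : R ≃+* R) (δ : R → R)
    (hδadd : ∀ r s : R, δ (r + s) = δ r + δ s)
    (hδmul : ∀ r s : R, δ (r * s) = σ r * δ s + δ r * s)
    (hcomm : ∀ r : R, x * ι r = ι (σ r) * x + ι (δ r))
    (hσδ : ∀ r : R, σ (δ r) = δ (σ r))
    (hbasis : Function.Bijective fun f : ℕ →₀ R => f.sum fun n c => ι c * x ^ n) :
    ∃ σt : A ≃+* A, ∀ (r : R) (n : ℕ), σt (ι r * x ^ n) = ι (σ r) * x ^ n := by
  classical
  set F : (ℕ →₀ R) →+ A := Finsupp.liftAddHom fun n =>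
    (AddMonoidHom.mulRight (x ^ n)).comp ι.toAddMonoidHom with hFdef
  have hF : ∀ f : ℕ →₀ R, F f = f.sum fun n c => ι c * x ^ n := by
    intro f
    rw [hFdef, Finsupp.liftAddHom_apply]
    rfl
  have hFbij : Function.Bijective F := by
    have hco : ⇑F = fun f : ℕ →₀ R => f.sum fun n c => ι c * x ^ n := funext hF
    rw [hco]; exact hbasis
  set E : (ℕ →₀ R) ≃+ A := AddEquiv.ofBijective F hFbij with hEdef
  have hE : ∀ f : ℕ →₀ R, E f = f.sum fun n c => ι c * x ^ n := hF
  set m : (ℕ →₀ R) ≃+ (ℕ →₀ R) := Finsupp.mapRange.addEquiv σ.toAddEquiv with hmdef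
  set T : A ≃+ A := (E.symm.trans m).trans E with hTdef
  have hEsingle : ∀ (n : ℕ) (r : R), E (Finsupp.single n r) = ι r * x ^ n := by
    intro n r
    rw [hE, Finsupp.sum_single_index]
    simp
  have hT : ∀ (r : R) (n : ℕ), T (ι r * x ^ n) = ι (σ r) * x ^ n := by
    intro r n
    have h0 : T (ι r * x ^ n) = E (m (E.symm (ι r * x ^ n))) := rfl
    rw [h0, ← hEsingle n r, E.symm_apply_apply]
    have hm : m (Finsupp.single n r) = Finsupp.single n (σ r) := by
      simp [hmdef, Finsupp.mapRange_single]
    rw [hm, hEsingle]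
  -- right multiplication by x
  have hTx : ∀ a : A, T (a * x) = T a * x := by
    intro a
    obtain ⟨f, rfl⟩ := hbasis.surjective a
    dsimp only
    rw [Finsupp.sum_mul]
    simp only [map_finsuppSum]
    rw [Finsupp.sum_mul]
    refine Finsupp.sum_congr fun n _ => ?_
    rw [mul_assoc, ← pow_succ, hT, hT, mul_assoc, ← pow_succ]
  have hTxpow : ∀ (a : A) (n : ℕ), T (a * x ^ n) = T a * x ^ n := by
    intro a n
    induction n with
    | zero => simp
    | succ n ih => rw [pow_succ, ← mul_assoc, hTx, ih, mul_assoc, ← pow_succ]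
  -- key basis computation
  have key : ∀ (n : ℕ) (r s : R), T (ι r * x ^ n * ι s) = ι (σ r) * x ^ n * ι (σ s) := by
    intro n
    induction n with
    | zero =>
      intro r s
      simp only [pow_zero, mul_one, ← map_mul]
      have := hT (r * s) 0
      simpa using this
    | succ n ih =>
      intro r s
      have hsplit : ι r * x ^ (n + 1) * ι s
          = ι r * x ^ n * ι (σ s) * x + ι r * x ^ n * ι (δ s) := by
        rw [pow_succ, ← mul_assoc, mul_assoc (ι r * x ^ n) x (ι s), hcomm, mul_add,
          ← mul_assoc]
      rw [hsplit, map_add, hTx, ih, ih, hσδ]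
      have hback : ι (σ r) * x ^ n * ι (σ (σ s)) * x + ι (σ r) * x ^ n * ι (δ (σ s))
          = ι (σ r) * x ^ (n + 1) * ι (σ s) := by
        rw [pow_succ, ← mul_assoc, mul_assoc (ι (σ r) * x ^ n) x (ι (σ s)), hcomm, mul_add,
          ← mul_assoc]
      rw [hback]
  -- right multiplication by ι s
  have hTs : ∀ (a : A) (s : R), T (a * ι s) = T a * ι (σ s) := by
    intro a s
    obtain ⟨f, rfl⟩ := hbasis.surjective a
    dsimp only
    rw [Finsupp.sum_mul]
    simp only [map_finsuppSum]
    rw [Finsupp.sum_mul]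
    refine Finsupp.sum_congr fun n _ => ?_
    rw [key, hT]
  have hmul : ∀ a b : A, T (a * b) = T a * T b := by
    intro a b
    obtain ⟨g, rfl⟩ := hbasis.surjective b
    dsimp only
    rw [Finsupp.mul_sum]
    simp only [map_finsuppSum]
    rw [Finsupp.mul_sum]
    refine Finsupp.sum_congr fun n _ => ?_
    rw [← mul_assoc, hTxpow, hTs, hT, mul_assoc]
  exact ⟨{ T with map_mul' := hmul }, hT⟩
end

section
/- The unique additive map δ̃ : A → A determined on the left R-module basis by δ̃(r·x^n) = δ(r)·x^n for all r ∈ R and n ∈ ℕ is a σ̃-derivation of A, i.e., δ̃(fg) = σ̃(f)·δ̃(g) + δ̃(f)·g for all f, g ∈ A, where σ̃ : A → A is the ring automorphism determined by σ̃(r·x^n) = σ(r)·x^n. -/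
/-!
Expanding `a ∈ A` in the left `R`-basis `x ^ n`, the maps `σ̃` and `δ̃` apply `σ` and `δ` to the
coefficients. As `σ` and `δ` commute, the relation `x r = σ(r) x + δ(r)` shows that `σ̃` and `δ̃`
commute with left multiplication by `x`, while the twisted Leibniz rule of `δ` gives
`δ̃(r a) = σ(r) δ̃(a) + δ(r) a` for `r ∈ R` (and likewise `σ̃(r a) = σ(r) σ̃(a)`). For `f = r x^m`
these combine to `δ̃(f g) = σ̃(f) δ̃(g) + δ̃(f) g` (and `σ̃(f g) = σ̃(f) σ̃(g)`), and additivity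
in `f` does the rest.
-/

namespace OreExtension

variable {R A : Type*} [Ring R] [Ring A]

noncomputable def monomialSum (ι : R →+* A) (x : A) : (ℕ →₀ R) →+ A :=
  Finsupp.liftAddHom fun n => (AddMonoidHom.mulRight (x ^ n)).comp ι.toAddMonoidHom

variable {ι : R →+* A} {x : A}

theorem monomialSum_single (n : ℕ) (r : R) :
    monomialSum ι x (Finsupp.single n r) = ι r * x ^ n :=
  Finsupp.liftAddHom_apply_single _ n r

theorem induction_on (hspan : Function.Surjective (monomialSum ι x)) {p : A → Prop} (a : A)
    (zero : p 0) (monomial : ∀ (r : R) (n : ℕ), p (ι r * x ^ n))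
    (add : ∀ a b, p a → p b → p (a + b)) : p a := by
  obtain ⟨f, rfl⟩ := hspan a
  induction f using Finsupp.induction with
  | zero => simpa using zero
  | single_add n r f _ _ ih =>
    rw [map_add, monomialSum_single]
    exact add _ _ (monomial r n) ih

section CoefficientMaps

variable (hbasis : Function.Bijective (monomialSum ι x))

noncomputable def coeffEquiv : (ℕ →₀ R) ≃+ A :=
  AddEquiv.ofBijective (monomialSum ι x) hbasis

theorem coeffEquiv_symm_monomial (r : R) (n : ℕ) :
    (coeffEquiv hbasis).symm (ι r * x ^ n) = Finsupp.single n r := by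
  rw [AddEquiv.symm_apply_eq]
  exact (monomialSum_single n r).symm

noncomputable def mapCoeffs (φ : R →+ R) : A →+ A :=
  (coeffEquiv hbasis).toAddMonoidHom.comp
    ((Finsupp.mapRange.addMonoidHom φ).comp (coeffEquiv hbasis).symm.toAddMonoidHom)

theorem mapCoeffs_monomial (φ : R →+ R) (r : R) (n : ℕ) :
    mapCoeffs hbasis φ (ι r * x ^ n) = ι (φ r) * x ^ n := by
  simp only [mapCoeffs, AddMonoidHom.comp_apply, AddEquiv.coe_toAddMonoidHom,
    coeffEquiv_symm_monomial, Finsupp.mapRange.addMonoidHom_apply, Finsupp.mapRange_single]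
  exact monomialSum_single n (φ r)

noncomputable def mapCoeffsEquiv (φ : R ≃+ R) : A ≃+ A :=
  (coeffEquiv hbasis).symm.trans ((Finsupp.mapRange.addEquiv φ).trans (coeffEquiv hbasis))

theorem mapCoeffsEquiv_monomial (φ : R ≃+ R) (r : R) (n : ℕ) :
    mapCoeffsEquiv hbasis φ (ι r * x ^ n) = ι (φ r) * x ^ n := by
  simp only [mapCoeffsEquiv, AddEquiv.trans_apply, coeffEquiv_symm_monomial,
    Finsupp.mapRange.addEquiv_apply, Finsupp.mapRange_single]
  exact monomialSum_single n (φ r)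

end CoefficientMaps

section TwistedLeibniz

variable {σ δ : R → R} (hcomm : ∀ r : R, x * ι r = ι (σ r) * x + ι (δ r))
  (hspan : Function.Surjective (monomialSum ι x))

include hcomm in
theorem x_mul_monomial (r : R) (n : ℕ) :
    x * (ι r * x ^ n) = ι (σ r) * x ^ (n + 1) + ι (δ r) * x ^ n := by
  rw [← mul_assoc, hcomm, add_mul, mul_assoc, ← pow_succ']

variable {T : A →+ A} {φ : R → R} (hT : ∀ (r : R) (n : ℕ), T (ι r * x ^ n) = ι (φ r) * x ^ n)

include hcomm hspan hT in
theorem map_x_pow_mul (hσ : ∀ r, φ (σ r) = σ (φ r)) (hδ : ∀ r, φ (δ r) = δ (φ r))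
    (m : ℕ) (a : A) : T (x ^ m * a) = x ^ m * T a := by
  have map_x_mul (a : A) : T (x * a) = x * T a := by
    induction a using induction_on hspan with
    | zero => simp
    | monomial r n => rw [x_mul_monomial hcomm, map_add, hT, hT, hT, x_mul_monomial hcomm, hσ, hδ]
    | add a b ha hb => rw [mul_add, map_add, ha, hb, map_add, mul_add]
  induction m generalizing a with
  | zero => simp
  | succ m ih => rw [pow_succ, mul_assoc, ih, map_x_mul, ← mul_assoc, ← pow_succ]

include hspan hT in
theorem map_ι_mul {ψ : R → R} (hφ : ∀ r s, φ (r * s) = σ r * φ s + ψ r * s) (r : R) (a : A) :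
    T (ι r * a) = ι (σ r) * T a + ι (ψ r) * a := by
  induction a using induction_on hspan with
  | zero => simp
  | monomial s n =>
    rw [← mul_assoc, ← map_mul, hT, hT, hφ, map_add, map_mul, map_mul, add_mul, mul_assoc,
      mul_assoc]
  | add a b ha hb =>
    rw [mul_add, map_add, ha, hb, map_add, mul_add, mul_add]
    abel

include hcomm hspan hT in
/-- With `φ = σ`, `ψ = 0` this is the multiplicativity of `S`; with `φ = ψ = δ` it is the
`S`-derivation rule of `T`. -/
theorem map_mul_eq {S D : A →+ A} {ψ : R → R}
    (hS : ∀ (r : R) (n : ℕ), S (ι r * x ^ n) = ι (σ r) * x ^ n)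
    (hD : ∀ (r : R) (n : ℕ), D (ι r * x ^ n) = ι (ψ r) * x ^ n)
    (hφ : ∀ r s, φ (r * s) = σ r * φ s + ψ r * s)
    (hσ : ∀ r, φ (σ r) = σ (φ r)) (hδ : ∀ r, φ (δ r) = δ (φ r)) (f g : A) :
    T (f * g) = S f * T g + D f * g := by
  induction f using induction_on hspan with
  | zero => simp
  | monomial r m =>
    rw [mul_assoc, map_ι_mul hspan hT hφ, map_x_pow_mul hcomm hspan hT hσ hδ, hS, hD,
      mul_assoc, mul_assoc]
  | add a b ha hb =>
    rw [add_mul, map_add, ha, hb, map_add, map_add, add_mul, add_mul]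
    abel

end TwistedLeibniz

end OreExtension

open OreExtension

theorem skew_poly_extended_delta_is_sigma_derivation_general
    {R A : Type*} [Ring R] [Ring A] (ι : R →+* A)
    (x : A) (σ : R ≃+* R) (δ : R → R)
    (hδadd : ∀ r s : R, δ (r + s) = δ r + δ s)
    (hδmul : ∀ r s : R, δ (r * s) = σ r * δ s + δ r * s)
    (hcomm : ∀ r : R, x * ι r = ι (σ r) * x + ι (δ r))
    (hσδ : ∀ r : R, σ (δ r) = δ (σ r))
    (hbasis : Function.Bijective fun f : ℕ →₀ R => f.sum fun n c => ι c * x ^ n) :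
    ∃ (σt : A ≃+* A) (δt : A →+ A),
      (∀ (r : R) (n : ℕ), σt (ι r * x ^ n) = ι (σ r) * x ^ n) ∧
      (∀ (r : R) (n : ℕ), δt (ι r * x ^ n) = ι (δ r) * x ^ n) ∧
      (∀ f g : A, δt (f * g) = σt f * δt g + δt f * g) := by
  have hbasis : Function.Bijective (monomialSum ι x) := hbasis
  set σt := mapCoeffsEquiv hbasis σ.toAddEquiv
  have hσt (r : R) (n : ℕ) : σt (ι r * x ^ n) = ι (σ r) * x ^ n :=
    mapCoeffsEquiv_monomial hbasis _ r n
  set δt := mapCoeffs hbasis (AddMonoidHom.mk' δ hδadd)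
  have hδt (r : R) (n : ℕ) : δt (ι r * x ^ n) = ι (δ r) * x ^ n :=
    mapCoeffs_monomial hbasis _ r n
  have hσt_mul (f g : A) : σt (f * g) = σt f * σt g := by
    simpa using map_mul_eq (T := σt.toAddMonoidHom) (S := σt.toAddMonoidHom) (D := 0)
      (ψ := fun _ => 0) hcomm hbasis.surjective hσt hσt (by simp) (by simp) (fun _ => rfl) hσδ
      f g
  refine ⟨{ σt with map_mul' := hσt_mul }, δt, hσt, hδt, fun f g => ?_⟩
  exact map_mul_eq (S := σt.toAddMonoidHom) hcomm hbasis.surjective hδt hσt hδt hδmul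
    (fun r => (hσδ r).symm) (fun _ => rfl) f g

/-- Let `A = R[x; σ, δ]` be an Ore extension of automorphism type:
`A` contains `R` as a subring (via the injective ring homomorphism `ι` sharing the
identity), `σ` is a ring automorphism of `R`, `δ` is a `σ`-derivation commuting with
`σ`, `x·r = σ(r)·x + δ(r)` for all `r ∈ R`, and `A` is free as a left `R`-module with
basis `{x^n : n ∈ ℕ}`.  Then the unique additive map `δ̃ : A → A` determined on the
basis by `δ̃(r·x^n) = δ(r)·x^n` is a `σ̃`-derivation of `A`, i.e.
`δ̃(fg) = σ̃(f)·δ̃(g) + δ̃(f)·g` for all `f, g ∈ A`, where `σ̃` is the ring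
automorphism of `A` determined by `σ̃(r·x^n) = σ(r)·x^n`. -/
theorem skew_poly_extended_delta_is_sigma_derivation
    {R A : Type*} [Ring R] [Ring A] (ι : R →+* A) (hι : Function.Injective ι)
    (x : A) (σ : R ≃+* R) (δ : R → R)
    (hδadd : ∀ r s : R, δ (r + s) = δ r + δ s)
    (hδmul : ∀ r s : R, δ (r * s) = σ r * δ s + δ r * s)
    (hcomm : ∀ r : R, x * ι r = ι (σ r) * x + ι (δ r))
    (hσδ : ∀ r : R, σ (δ r) = δ (σ r))
    (hbasis : Function.Bijective fun f : ℕ →₀ R => f.sum fun n c => ι c * x ^ n) :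
    ∃ (σt : A ≃+* A) (δt : A →+ A),
      (∀ (r : R) (n : ℕ), σt (ι r * x ^ n) = ι (σ r) * x ^ n) ∧
      (∀ (r : R) (n : ℕ), δt (ι r * x ^ n) = ι (δ r) * x ^ n) ∧
      (∀ f g : A, δt (f * g) = σt f * δt g + δt f * g) :=
  skew_poly_extended_delta_is_sigma_derivation_general ι x σ δ hδadd hδmul hcomm hσδ hbasis
end

section
/- For i = 1, 2, the unique additive map σ̃_i : A → A determined on the left R-module basis by σ̃_i(r·x_1^{a}x_2^{b}) = σ_i(r)·x_1^{a}x_2^{b} for all r ∈ R and a, b ∈ ℕ is a ring automorphism of A. -/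
/-- Let `A` be a skew PBW extension of `R` in two variables of
automorphism type: `A` contains `R` as a subring (via the injective ring homomorphism
`ι` sharing the identity), `A` is free as a left `R`-module with basis the ordered
monomials `{x₁^a x₂^b : (a,b) ∈ ℕ²}`, for `i = 1, 2` there are ring automorphisms
`σᵢ` of `R` and `σᵢ`-derivations `δᵢ` with `xᵢ·r = σᵢ(r)·xᵢ + δᵢ(r)`, and there are
a nonzero `d ∈ R` and `r₀, r₁, r₂ ∈ R` with `x₂x₁ − d·x₁x₂ = r₀ + r₁x₁ + r₂x₂`;
assume all the compatibility conditions listed in the hypotheses (the `σ`'s and `δ`'s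
commute with each other, and the `δ`'s kill, and the `σ`'s fix, the structure
constants `d, r₀, r₁, r₂`).  Then for `i = 1, 2`, the unique additive map
`σ̃ᵢ : A → A` determined on the basis by `σ̃ᵢ(r·x₁^a x₂^b) = σᵢ(r)·x₁^a x₂^b`
is a ring automorphism of `A`. -/
theorem skew_pbw_two_vars_extended_sigma_is_ring_automorphism
    {R A : Type*} [Ring R] [Ring A] (ι : R →+* A) (hι : Function.Injective ι)
    (x₁ x₂ : A) (σ : Fin 2 → R ≃+* R) (δ : Fin 2 → R → R)
    (hδadd : ∀ (i : Fin 2) (r s : R), δ i (r + s) = δ i r + δ i s)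
    (hδmul : ∀ (i : Fin 2) (r s : R), δ i (r * s) = σ i r * δ i s + δ i r * s)
    (hcomm₁ : ∀ r : R, x₁ * ι r = ι (σ 0 r) * x₁ + ι (δ 0 r))
    (hcomm₂ : ∀ r : R, x₂ * ι r = ι (σ 1 r) * x₂ + ι (δ 1 r))
    (d r₀ r₁ r₂ : R) (hd : d ≠ 0)
    (hrel : x₂ * x₁ - ι d * (x₁ * x₂) = ι r₀ + ι r₁ * x₁ + ι r₂ * x₂)
    (hσδ : ∀ (i : Fin 2) (r : R), σ i (δ i r) = δ i (σ i r))
    (hδδ : ∀ (i j : Fin 2) (r : R), δ i (δ j r) = δ j (δ i r))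
    (hδσ : ∀ (i j : Fin 2) (r : R), δ i (σ j r) = σ j (δ i r))
    (hσσ : ∀ (i j : Fin 2) (r : R), σ i (σ j r) = σ j (σ i r))
    (hδd : ∀ k : Fin 2, δ k d = 0)
    (hδr₀ : ∀ k : Fin 2, δ k r₀ = 0) (hδr₁ : ∀ k : Fin 2, δ k r₁ = 0)
    (hδr₂ : ∀ k : Fin 2, δ k r₂ = 0)
    (hσd : ∀ k : Fin 2, σ k d = d)
    (hσr₀ : ∀ k : Fin 2, σ k r₀ = r₀) (hσr₁ : ∀ k : Fin 2, σ k r₁ = r₁)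
    (hσr₂ : ∀ k : Fin 2, σ k r₂ = r₂)
    (hbasis : Function.Bijective fun f : ℕ × ℕ →₀ R =>
      f.sum fun ab c => ι c * (x₁ ^ ab.1 * x₂ ^ ab.2)) :
    ∀ i : Fin 2, ∃ σt : A ≃+* A,
      ∀ (r : R) (a b : ℕ),
        σt (ι r * (x₁ ^ a * x₂ ^ b)) = ι (σ i r) * (x₁ ^ a * x₂ ^ b) := by
  intro i
  classical
  -- The basis map as an additive hom
  let Bf : (ℕ × ℕ →₀ R) →+ A :=
    { toFun := fun f => f.sum fun ab c => ι c * (x₁ ^ ab.1 * x₂ ^ ab.2)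
      map_zero' := Finsupp.sum_zero_index
      map_add' := fun f g => by
        exact Finsupp.sum_add_index' (fun ab => by simp)
          (fun ab c₁ c₂ => by rw [map_add, add_mul]) }
  have hBbij : Function.Bijective (Bf : (ℕ × ℕ →₀ R) → A) := hbasis
  let E : (ℕ × ℕ →₀ R) ≃+ A := AddEquiv.ofBijective Bf hBbij
  let M : (ℕ × ℕ →₀ R) ≃+ (ℕ × ℕ →₀ R) :=
    Finsupp.mapRange.addEquiv (σ i).toAddEquiv
  let Φ : A ≃+ A := (E.symm.trans M).trans E
  have hBf_single : ∀ (ab : ℕ × ℕ) (c : R),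
      Bf (Finsupp.single ab c) = ι c * (x₁ ^ ab.1 * x₂ ^ ab.2) := by
    intro ab c
    exact Finsupp.sum_single_index
      (h := fun (ab : ℕ × ℕ) (c : R) => ι c * (x₁ ^ ab.1 * x₂ ^ ab.2)) (by simp)
  -- The key defining property of Φ
  have key : ∀ (r : R) (a b : ℕ),
      Φ (ι r * (x₁ ^ a * x₂ ^ b)) = ι (σ i r) * (x₁ ^ a * x₂ ^ b) := by
    intro r a b
    have h1 : ι r * (x₁ ^ a * x₂ ^ b) = E (Finsupp.single (a, b) r) :=
      (hBf_single (a, b) r).symm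
    rw [h1]
    show E (M (E.symm (E _))) = _
    rw [E.symm_apply_apply]
    have hM : M (Finsupp.single (a, b) r) = Finsupp.single (a, b) (σ i r) := by
      simp [M, Finsupp.mapRange_single]
    rw [hM]
    exact hBf_single (a, b) (σ i r)
  -- induction principle over A
  have span : ∀ P : A → Prop, P 0 → (∀ u v, P u → P v → P (u + v)) →
      (∀ (r : R) (a b : ℕ), P (ι r * (x₁ ^ a * x₂ ^ b))) → ∀ u, P u := by
    intro P h0 hadd hb u
    obtain ⟨f, rfl⟩ := hBbij.2 u
    exact Finsupp.induction f (by simpa using h0)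
      (fun ab c g _ _ ih => by
        rw [map_add]
        exact hadd _ _ (by rw [hBf_single]; exact hb c ab.1 ab.2) ih)
  -- Commutation with central constants
  have one₁ : ∀ c : R, σ 0 c = c → δ 0 c = 0 → ∀ y : A,
      x₁ * (ι c * y) = ι c * (x₁ * y) := by
    intro c h1 h2 y
    rw [← mul_assoc, hcomm₁, h1, h2, map_zero, add_zero, mul_assoc]
  have one₂ : ∀ c : R, σ 1 c = c → δ 1 c = 0 → ∀ y : A,
      x₂ * (ι c * y) = ι c * (x₂ * y) := by
    intro c h1 h2 y
    rw [← mul_assoc, hcomm₂, h1, h2, map_zero, add_zero, mul_assoc]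
  have cst₁ : ∀ c : R, σ 0 c = c → δ 0 c = 0 → ∀ (a : ℕ) (y : A),
      x₁ ^ a * (ι c * y) = ι c * (x₁ ^ a * y) := by
    intro c h1 h2 a
    induction a with
    | zero => intro y; simp
    | succ n ih =>
      intro y
      rw [pow_succ, mul_assoc, one₁ c h1 h2 y, ih (x₁ * y), mul_assoc]
  have cst₂ : ∀ c : R, σ 1 c = c → δ 1 c = 0 → ∀ (b : ℕ) (y : A),
      x₂ ^ b * (ι c * y) = ι c * (x₂ ^ b * y) := by
    intro c h1 h2 b
    induction b with
    | zero => intro y; simp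
    | succ n ih =>
      intro y
      rw [pow_succ, mul_assoc, one₂ c h1 h2 y, ih (x₂ * y), mul_assoc]
  have cst₂' : ∀ c : R, σ 1 c = c → δ 1 c = 0 → ∀ (b : ℕ),
      x₂ ^ b * ι c = ι c * x₂ ^ b := by
    intro c h1 h2 b
    have := cst₂ c h1 h2 b 1
    simpa using this
  -- instantiated commutation facts
  have cd₂ := cst₂ d (hσd 1) (hδd 1)
  have cr₀₂' := cst₂' r₀ (hσr₀ 1) (hδr₀ 1)
  have cr₁₂ := cst₂ r₁ (hσr₁ 1) (hδr₁ 1)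
  have cr₂₂ := cst₂ r₂ (hσr₂ 1) (hδr₂ 1)
  have cd₁ := cst₁ d (hσd 0) (hδd 0)
  have cr₀₁ := cst₁ r₀ (hσr₀ 0) (hδr₀ 0)
  have cr₁₁ := cst₁ r₁ (hσr₁ 0) (hδr₁ 0)
  have cr₂₁ := cst₁ r₂ (hσr₂ 0) (hδr₂ 0)
  have merge : ∀ (t c : R) (y : A), ι t * (ι c * y) = ι (t * c) * y := by
    intro t c y
    rw [← mul_assoc, ← map_mul]
  -- the rewritten defining relation
  have hswap : x₂ * x₁ = ι r₀ + ι r₁ * x₁ + ι r₂ * x₂ + ι d * (x₁ * x₂) := by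
    exact sub_eq_iff_eq_add.mp hrel
  -- Φ commutes with right multiplication by x₂
  have B2 : ∀ u : A, Φ (u * x₂) = Φ u * x₂ := by
    refine span _ (by simp) (fun u v hu hv => by
      rw [add_mul, map_add, hu, hv, map_add, add_mul]) ?_
    intro r a b
    have h : ∀ t : R, ι t * (x₁ ^ a * x₂ ^ b) * x₂ = ι t * (x₁ ^ a * x₂ ^ (b + 1)) := by
      intro t; simp [pow_succ, mul_assoc]
    rw [h, key, key, ← h]
  -- Φ commutes with right multiplication by x₁
  have B1 : ∀ u : A, Φ (u * x₁) = Φ u * x₁ := by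
    have claim : ∀ (b a : ℕ) (r : R),
        Φ (ι r * (x₁ ^ a * x₂ ^ b) * x₁) = ι (σ i r) * (x₁ ^ a * x₂ ^ b) * x₁ := by
      intro b
      induction b with
      | zero =>
        intro a r
        have h : ∀ t : R, ι t * (x₁ ^ a * x₂ ^ 0) * x₁ = ι t * (x₁ ^ (a + 1) * x₂ ^ 0) := by
          intro t; simp [pow_succ, mul_assoc]
        rw [h, key, ← h]
      | succ b ih =>
        intro a r
        have expand : ∀ t : R, ι t * (x₁ ^ a * x₂ ^ (b + 1)) * x₁
            = ι (t * r₀) * (x₁ ^ a * x₂ ^ b)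
              + ι (t * r₁) * (x₁ ^ a * x₂ ^ b) * x₁
              + ι (t * r₂) * (x₁ ^ a * x₂ ^ (b + 1))
              + ι (t * d) * (x₁ ^ a * x₂ ^ b) * x₁ * x₂ := by
          intro t
          calc ι t * (x₁ ^ a * x₂ ^ (b + 1)) * x₁
              = ι t * (x₁ ^ a * (x₂ ^ b * (x₂ * x₁))) := by
                simp [pow_succ, mul_assoc]
            _ = ι t * (x₁ ^ a * (x₂ ^ b * (ι r₀ + ι r₁ * x₁ + ι r₂ * x₂ + ι d * (x₁ * x₂)))) := by
                rw [hswap]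
            _ = _ := by
                simp only [mul_add, cr₀₂' b, cr₁₂ b, cr₂₂ b, cd₂ b]
                simp only [cr₀₁ a, cr₁₁ a, cr₂₁ a, cd₁ a, merge]
                simp [mul_assoc, pow_succ, mul_add]
        rw [expand, map_add, map_add, map_add]
        rw [show ι (r * d) * (x₁ ^ a * x₂ ^ b) * x₁ * x₂
            = (ι (r * d) * (x₁ ^ a * x₂ ^ b) * x₁) * x₂ from rfl]
        rw [B2, ih a (r * d), key, ih a (r * r₁), key, expand (σ i r)]
        simp only [map_mul, hσd i, hσr₀ i, hσr₁ i, hσr₂ i]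
    refine span _ (by simp) (fun u v hu hv => by
      rw [add_mul, map_add, hu, hv, map_add, add_mul]) ?_
    intro r a b
    rw [key, claim b a r]
  -- Φ is semilinear with respect to right multiplication by constants
  have A1 : ∀ (u : A) (s : R), Φ (u * ι s) = Φ u * ι (σ i s) := by
    have claim : ∀ (b a : ℕ) (r s : R),
        Φ (ι r * (x₁ ^ a * x₂ ^ b) * ι s)
          = ι (σ i r) * (x₁ ^ a * x₂ ^ b) * ι (σ i s) := by
      intro b
      induction b with
      | zero =>
        intro a
        induction a with
        | zero =>
          intro r s
          have h : ∀ t u : R, ι t * (x₁ ^ 0 * x₂ ^ 0) * ι u = ι (t * u) * (x₁ ^ 0 * x₂ ^ 0) := by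
            intro t u; simp [map_mul]
          rw [h, key, h, map_mul]
        | succ a ih =>
          intro r s
          have expand : ∀ t u : R, ι t * (x₁ ^ (a + 1) * x₂ ^ 0) * ι u
              = ι t * (x₁ ^ a * x₂ ^ 0) * ι (σ 0 u) * x₁
                + ι t * (x₁ ^ a * x₂ ^ 0) * ι (δ 0 u) := by
            intro t u
            calc ι t * (x₁ ^ (a + 1) * x₂ ^ 0) * ι u
                = ι t * (x₁ ^ a * (x₁ * ι u)) := by simp [pow_succ, mul_assoc]
              _ = ι t * (x₁ ^ a * (ι (σ 0 u) * x₁ + ι (δ 0 u))) := by rw [hcomm₁]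
              _ = _ := by simp [mul_add, mul_assoc]
          rw [expand, map_add]
          rw [show ι r * (x₁ ^ a * x₂ ^ 0) * ι (σ 0 s) * x₁
              = (ι r * (x₁ ^ a * x₂ ^ 0) * ι (σ 0 s)) * x₁ from rfl]
          rw [B1, ih r (σ 0 s), ih r (δ 0 s), expand (σ i r) (σ i s)]
          rw [hσσ i 0 s, hδσ 0 i s]
      | succ b ih =>
        intro a r s
        have expand : ∀ t u : R, ι t * (x₁ ^ a * x₂ ^ (b + 1)) * ι u
            = ι t * (x₁ ^ a * x₂ ^ b) * ι (σ 1 u) * x₂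
              + ι t * (x₁ ^ a * x₂ ^ b) * ι (δ 1 u) := by
          intro t u
          calc ι t * (x₁ ^ a * x₂ ^ (b + 1)) * ι u
              = ι t * (x₁ ^ a * (x₂ ^ b * (x₂ * ι u))) := by simp [pow_succ, mul_assoc]
            _ = ι t * (x₁ ^ a * (x₂ ^ b * (ι (σ 1 u) * x₂ + ι (δ 1 u)))) := by rw [hcomm₂]
            _ = _ := by simp [mul_add, mul_assoc]
        rw [expand, map_add]
        rw [show ι r * (x₁ ^ a * x₂ ^ b) * ι (σ 1 s) * x₂
            = (ι r * (x₁ ^ a * x₂ ^ b) * ι (σ 1 s)) * x₂ from rfl]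
        rw [B2, ih a r (σ 1 s), ih a r (δ 1 s), expand (σ i r) (σ i s)]
        rw [hσσ i 1 s, hδσ 1 i s]
    intro u s
    revert u
    refine span (fun u => Φ (u * ι s) = Φ u * ι (σ i s)) (by simp)
      (fun u v hu hv => by
        show Φ ((u + v) * ι s) = Φ (u + v) * ι (σ i s)
        rw [add_mul, map_add, hu, hv, map_add, add_mul]) ?_
    intro r a b
    rw [key, claim b a r s]
  -- powers
  have B1p : ∀ (u : A) (c : ℕ), Φ (u * x₁ ^ c) = Φ u * x₁ ^ c := by
    intro u c
    induction c with
    | zero => simp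
    | succ n ih => rw [pow_succ, ← mul_assoc, B1, ih, mul_assoc]
  have B2p : ∀ (u : A) (c : ℕ), Φ (u * x₂ ^ c) = Φ u * x₂ ^ c := by
    intro u c
    induction c with
    | zero => simp
    | succ n ih => rw [pow_succ, ← mul_assoc, B2, ih, mul_assoc]
  -- multiplicativity
  have hmul : ∀ u v : A, Φ (u * v) = Φ u * Φ v := by
    intro u v
    revert u
    have := span (fun v => ∀ u, Φ (u * v) = Φ u * Φ v) (by simp)
      (fun v w hv hw u => by
        show Φ (u * (v + w)) = Φ u * Φ (v + w)
        rw [mul_add, map_add, hv, hw, map_add, mul_add]) ?_ v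
    · exact this
    intro s c e u
    have h : u * (ι s * (x₁ ^ c * x₂ ^ e)) = ((u * ι s) * x₁ ^ c) * x₂ ^ e := by
      simp [mul_assoc]
    rw [h, B2p, B1p, A1, key]
    simp [mul_assoc]
  have hone : Φ (1 : A) = 1 := by
    have h := key 1 0 0
    simpa using h
  let Ψ : A →+* A :=
    { toFun := Φ
      map_one' := hone
      map_mul' := hmul
      map_zero' := Φ.map_zero
      map_add' := Φ.map_add }
  exact ⟨RingEquiv.ofBijective Ψ Φ.bijective, key⟩
end

section
/- For i = 1, 2, the unique additive map δ̃_i : A → A determined on the left R-module basis by δ̃_i(r·x_1^{a}x_2^{b}) = δ_i(r)·x_1^{a}x_2^{b} for all r ∈ R and a, b ∈ ℕ is a σ̃_i-derivation of A, i.e., δ̃_i(fg) = σ̃_i(f)·δ̃_i(g) + δ̃_i(f)·g for all f, g ∈ A, where σ̃_i : A → A is the ring automorphism determined by σ̃_i(r·x_1^{a}x_2^{b}) = σ_i(r)·x_1^{a}x_2^{b}. -/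
/-!
The map `f ↦ !![σ̃ f, δ̃ f; 0, f]` into `2 × 2` matrices over `A` is multiplicative exactly when
`σ̃` is multiplicative and `δ̃` is a `σ̃`-derivation. It extends, coefficientwise on the PBW basis,
the ring map `θ : r ↦ !![σ r, δ r; 0, r]` (a ring map because `δ` is a `σ`-derivation) and sends
`x₁, x₂` to scalar matrices. The compatibility hypotheses say precisely that `θ` and these scalar
matrices satisfy the commutation rules and the quadratic relation of `A`.

So everything reduces to a universal property of the PBW basis: an additive map `Θ : A → B` with
`Θ (r x₁ᵃ x₂ᵇ) = θ r X₁ᵃ X₂ᵇ`, where `θ`, `X₁`, `X₂` satisfy the relations of `ι`, `x₁`, `x₂`, is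
multiplicative. One commutes `Θ` successively past left multiplication by `ι r`, by `x₁`, and by
`x₂`; for `x₂` the monomial case needs an induction on the `x₁`-degree, which rewrites
`x₂ x₁` through the quadratic relation.
-/

namespace SkewPBW

open Function

section Transport

variable {R A M : Type*} [Ring R] [Ring A] (ι : R →+* A) (m : M → A)

noncomputable def monomialSum : (M →₀ R) →+ A :=
  Finsupp.liftAddHom fun k => (AddMonoidHom.mulRight (m k)).comp ι.toAddMonoidHom

theorem monomialSum_apply (f : M →₀ R) :
    monomialSum ι m f = f.sum fun k c => ι c * m k :=
  Finsupp.liftAddHom_apply _ f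

theorem monomialSum_single (k : M) (r : R) :
    monomialSum ι m (Finsupp.single k r) = ι r * m k := by
  simp [monomialSum]

variable {ι m}

theorem addHom_ext {B : Type*} [AddZeroClass B] (hm : Surjective (monomialSum ι m))
    {F G : A →+ B} (h : ∀ r k, F (ι r * m k) = G (ι r * m k)) : F = G := by
  have hcomp : F.comp (monomialSum ι m) = G.comp (monomialSum ι m) :=
    Finsupp.addHom_ext fun k r => by simpa [monomialSum_single] using h r k
  ext w
  obtain ⟨f, rfl⟩ := hm w
  exact DFunLike.congr_fun hcomp f

noncomputable def monomialEquiv (hm : Bijective (monomialSum ι m)) : (M →₀ R) ≃+ A :=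
  AddEquiv.ofBijective (monomialSum ι m) hm

theorem monomialEquiv_apply (hm : Bijective (monomialSum ι m)) (f : M →₀ R) :
    monomialEquiv hm f = monomialSum ι m f :=
  rfl

theorem monomialEquiv_symm_apply_mul (hm : Bijective (monomialSum ι m)) (r : R) (k : M) :
    (monomialEquiv hm).symm (ι r * m k) = Finsupp.single k r := by
  rw [AddEquiv.symm_apply_eq, monomialEquiv_apply, monomialSum_single]

noncomputable def coeffwiseMap (hm : Bijective (monomialSum ι m)) (φ : R →+ R) : A →+ A :=
  ((monomialEquiv hm).toAddMonoidHom.comp (Finsupp.mapRange.addMonoidHom φ)).comp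
    (monomialEquiv hm).symm.toAddMonoidHom

theorem coeffwiseMap_apply (hm : Bijective (monomialSum ι m)) (φ : R →+ R) (r : R) (k : M) :
    coeffwiseMap hm φ (ι r * m k) = ι (φ r) * m k := by
  simp [coeffwiseMap, monomialEquiv_symm_apply_mul hm, monomialEquiv_apply, monomialSum_single]

noncomputable def coeffwiseEquiv (hm : Bijective (monomialSum ι m)) (σ : R ≃+ R) : A ≃+ A :=
  ((monomialEquiv hm).symm.trans (Finsupp.mapRange.addEquiv σ)).trans (monomialEquiv hm)

theorem coeffwiseEquiv_apply (hm : Bijective (monomialSum ι m)) (σ : R ≃+ R) (r : R) (k : M) :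
    coeffwiseEquiv hm σ (ι r * m k) = ι (σ r) * m k := by
  simp [coeffwiseEquiv, monomialEquiv_symm_apply_mul hm, monomialEquiv_apply, monomialSum_single]

end Transport

section Relations

variable {R A : Type*} [Ring R] [Ring A]

def SkewCommutes (ι : R →+* A) (σ δ : R → R) (x : A) : Prop :=
  ∀ r, x * ι r = ι (σ r) * x + ι (δ r)

def PBWRelation (ι : R →+* A) (d r₀ r₁ r₂ : R) (x₁ x₂ : A) : Prop :=
  x₂ * x₁ - ι d * (x₁ * x₂) = ι r₀ + ι r₁ * x₁ + ι r₂ * x₂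

def pbwMonomial (x₁ x₂ : A) (ab : ℕ × ℕ) : A :=
  x₁ ^ ab.1 * x₂ ^ ab.2

theorem x₁_mul_pbwMonomial (x₁ x₂ : A) (ab : ℕ × ℕ) :
    x₁ * pbwMonomial x₁ x₂ ab = pbwMonomial x₁ x₂ (ab.1 + 1, ab.2) := by
  rw [pbwMonomial, pbwMonomial, pow_succ', mul_assoc]

theorem x₂_mul_pbwMonomial_zero (x₁ x₂ : A) (b : ℕ) :
    x₂ * pbwMonomial x₁ x₂ (0, b) = pbwMonomial x₁ x₂ (0, b + 1) := by
  simp [pbwMonomial, pow_succ']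

theorem PBWRelation.mul_mul_eq {ι : R →+* A} {d r₀ r₁ r₂ : R} {x₁ x₂ : A}
    (h : PBWRelation ι d r₀ r₁ r₂ x₁ x₂) (w : A) :
    x₂ * (x₁ * w) = ι r₀ * w + ι r₁ * (x₁ * w) + ι r₂ * (x₂ * w) + ι d * (x₁ * (x₂ * w)) := by
  rw [← mul_assoc, sub_eq_iff_eq_add.mp h]
  noncomm_ring

theorem pbwMonomial_map {B : Type*} [Ring B] (f : A →+* B) (x₁ x₂ : A) (ab : ℕ × ℕ) :
    pbwMonomial (f x₁) (f x₂) ab = f (pbwMonomial x₁ x₂ ab) := by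
  simp [pbwMonomial]

theorem PBWRelation.map {B : Type*} [Ring B] {ι : R →+* A} {θ : R →+* B} {d r₀ r₁ r₂ : R}
    {x₁ x₂ : A} (h : PBWRelation ι d r₀ r₁ r₂ x₁ x₂) (f : A →+* B) (hd : θ d = f (ι d))
    (h₀ : θ r₀ = f (ι r₀)) (h₁ : θ r₁ = f (ι r₁)) (h₂ : θ r₂ = f (ι r₂)) :
    PBWRelation θ d r₀ r₁ r₂ (f x₁) (f x₂) := by
  simpa [PBWRelation, hd, h₀, h₁, h₂] using congrArg f h

end Relations

section UniversalProperty

variable {R A B : Type*} [Ring R] [Ring A] [Ring B] {ι : R →+* A} {θ : R →+* B}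
  {x₁ x₂ : A} {X₁ X₂ : B} {Θ : A →+ B}

theorem map_pow_mul {x : A} {X : B} (h : ∀ w, Θ (x * w) = X * Θ w) (n : ℕ) (w : A) :
    Θ (x ^ n * w) = X ^ n * Θ w := by
  induction n with
  | zero => simp
  | succ n ih => rw [pow_succ', mul_assoc, h, ih, ← mul_assoc, ← pow_succ']

theorem map_pbwMonomial
    (hΘ : ∀ r ab, Θ (ι r * pbwMonomial x₁ x₂ ab) = θ r * pbwMonomial X₁ X₂ ab) (ab : ℕ × ℕ) :
    Θ (pbwMonomial x₁ x₂ ab) = pbwMonomial X₁ X₂ ab := by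
  simpa using hΘ 1 ab

variable (hsurj : Surjective (monomialSum ι (pbwMonomial x₁ x₂)))
  (hΘ : ∀ r ab, Θ (ι r * pbwMonomial x₁ x₂ ab) = θ r * pbwMonomial X₁ X₂ ab)
include hsurj hΘ

theorem map_ι_mul (r : R) (w : A) : Θ (ι r * w) = θ r * Θ w := by
  refine DFunLike.congr_fun (addHom_ext hsurj (F := Θ.comp (AddMonoidHom.mulLeft (ι r)))
    (G := (AddMonoidHom.mulLeft (θ r)).comp Θ) fun s k => ?_) w
  simp only [AddMonoidHom.comp_apply, AddMonoidHom.coe_mulLeft]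
  rw [← mul_assoc, ← map_mul, hΘ, hΘ, map_mul, mul_assoc]

theorem map_mul_of_skewCommutes {x : A} {X : B} {σ δ : R → R} (hx : SkewCommutes ι σ δ x)
    (hX : SkewCommutes θ σ δ X)
    (hmono : ∀ ab, Θ (x * pbwMonomial x₁ x₂ ab) = X * pbwMonomial X₁ X₂ ab) (w : A) :
    Θ (x * w) = X * Θ w := by
  refine DFunLike.congr_fun (addHom_ext hsurj (F := Θ.comp (AddMonoidHom.mulLeft x))
    (G := (AddMonoidHom.mulLeft X).comp Θ) fun s k => ?_) w
  simp only [AddMonoidHom.comp_apply, AddMonoidHom.coe_mulLeft]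
  rw [← mul_assoc, hx, add_mul, map_add, mul_assoc, map_ι_mul hsurj hΘ, hmono, hΘ, hΘ,
    ← mul_assoc X, hX, add_mul, mul_assoc]

theorem map_x₁_mul {σ₁ δ₁ : R → R} (h₁ : SkewCommutes ι σ₁ δ₁ x₁) (H₁ : SkewCommutes θ σ₁ δ₁ X₁)
    (w : A) : Θ (x₁ * w) = X₁ * Θ w :=
  map_mul_of_skewCommutes hsurj hΘ h₁ H₁ (fun ab => by
    rw [x₁_mul_pbwMonomial, x₁_mul_pbwMonomial, map_pbwMonomial hΘ]) w

theorem map_x₂_mul_x₁_mul {σ₁ δ₁ : R → R} (h₁ : SkewCommutes ι σ₁ δ₁ x₁)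
    (H₁ : SkewCommutes θ σ₁ δ₁ X₁) {d r₀ r₁ r₂ : R} (hrel : PBWRelation ι d r₀ r₁ r₂ x₁ x₂)
    (Hrel : PBWRelation θ d r₀ r₁ r₂ X₁ X₂) {w : A} (hw : Θ (x₂ * w) = X₂ * Θ w) :
    Θ (x₂ * (x₁ * w)) = X₂ * Θ (x₁ * w) := by
  simp only [PBWRelation.mul_mul_eq hrel, PBWRelation.mul_mul_eq Hrel, map_add,
    map_ι_mul hsurj hΘ, map_x₁_mul hsurj hΘ h₁ H₁, hw]

theorem map_x₂_mul_pbwMonomial {σ₁ δ₁ : R → R} (h₁ : SkewCommutes ι σ₁ δ₁ x₁)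
    (H₁ : SkewCommutes θ σ₁ δ₁ X₁) {d r₀ r₁ r₂ : R} (hrel : PBWRelation ι d r₀ r₁ r₂ x₁ x₂)
    (Hrel : PBWRelation θ d r₀ r₁ r₂ X₁ X₂) (ab : ℕ × ℕ) :
    Θ (x₂ * pbwMonomial x₁ x₂ ab) = X₂ * pbwMonomial X₁ X₂ ab := by
  obtain ⟨a, b⟩ := ab
  induction a with
  | zero =>
    rw [x₂_mul_pbwMonomial_zero, x₂_mul_pbwMonomial_zero, map_pbwMonomial hΘ]
  | succ a ih =>
    rw [← map_pbwMonomial hΘ] at ih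
    have step := map_x₂_mul_x₁_mul hsurj hΘ h₁ H₁ hrel Hrel ih
    rwa [x₁_mul_pbwMonomial, map_pbwMonomial hΘ] at step

theorem map_mul_of_pbwRelations {σ₁ δ₁ σ₂ δ₂ : R → R} (h₁ : SkewCommutes ι σ₁ δ₁ x₁)
    (H₁ : SkewCommutes θ σ₁ δ₁ X₁) (h₂ : SkewCommutes ι σ₂ δ₂ x₂) (H₂ : SkewCommutes θ σ₂ δ₂ X₂)
    {d r₀ r₁ r₂ : R} (hrel : PBWRelation ι d r₀ r₁ r₂ x₁ x₂)
    (Hrel : PBWRelation θ d r₀ r₁ r₂ X₁ X₂) (f g : A) : Θ (f * g) = Θ f * Θ g := by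
  have hx₂ : ∀ w, Θ (x₂ * w) = X₂ * Θ w :=
    map_mul_of_skewCommutes hsurj hΘ h₂ H₂ (map_x₂_mul_pbwMonomial hsurj hΘ h₁ H₁ hrel Hrel)
  have hmono : ∀ ab w, Θ (pbwMonomial x₁ x₂ ab * w) = pbwMonomial X₁ X₂ ab * Θ w := by
    intro ab w
    rw [pbwMonomial, pbwMonomial, mul_assoc, map_pow_mul (map_x₁_mul hsurj hΘ h₁ H₁),
      map_pow_mul hx₂, mul_assoc]
  refine DFunLike.congr_fun (addHom_ext hsurj (F := Θ.comp (AddMonoidHom.mulRight g))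
    (G := (AddMonoidHom.mulRight (Θ g)).comp Θ) fun r k => ?_) f
  simp only [AddMonoidHom.comp_apply, AddMonoidHom.coe_mulRight]
  rw [mul_assoc, map_ι_mul hsurj hΘ, hmono, hΘ, mul_assoc]

end UniversalProperty

section Matrix

open Matrix

variable {R A : Type*} [Ring R] [Ring A] (ι : R →+* A) (σ : R →+* R) (δ : R →+ R)
  (hδ : ∀ r s, δ (r * s) = σ r * δ s + δ r * s)

def derivationMatrix : R →+* Matrix (Fin 2) (Fin 2) A where
  toFun r := !![ι (σ r), ι (δ r); 0, ι r]
  map_one' := by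
    have : δ 1 = 0 := by simpa using hδ 1 1
    simp [this, Matrix.one_fin_two]
  map_mul' r s := by simp [hδ]
  map_zero' := by ext i j; fin_cases i <;> fin_cases j <;> simp
  map_add' r s := by ext i j; fin_cases i <;> fin_cases j <;> simp

theorem derivationMatrix_apply (r : R) :
    derivationMatrix ι σ δ hδ r = !![ι (σ r), ι (δ r); 0, ι r] :=
  rfl

theorem derivationMatrix_eq_scalar {c : R} (hσc : σ c = c) (hδc : δ c = 0) :
    derivationMatrix ι σ δ hδ c = scalar (Fin 2) (ι c) := by
  ext i j
  fin_cases i <;> fin_cases j <;> simp [derivationMatrix_apply, hσc, hδc]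

theorem skewCommutes_scalar {σ' δ' : R → R} {x : A} (hx : SkewCommutes ι σ' δ' x)
    (hσσ' : ∀ r, σ (σ' r) = σ' (σ r)) (hδ'σ : ∀ r, δ' (σ r) = σ (δ' r))
    (hδσ' : ∀ r, δ (σ' r) = σ' (δ r)) (hδδ' : ∀ r, δ (δ' r) = δ' (δ r)) :
    SkewCommutes (derivationMatrix ι σ δ hδ) σ' δ' (scalar (Fin 2) x) := by
  intro r
  ext i j
  fin_cases i <;> fin_cases j <;> simp [derivationMatrix_apply, hx _, hσσ', hδ'σ, hδσ', hδδ']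

def triangularMap (S D : A →+ A) : A →+ Matrix (Fin 2) (Fin 2) A where
  toFun f := !![S f, D f; 0, f]
  map_zero' := by ext i j; fin_cases i <;> fin_cases j <;> simp
  map_add' f g := by ext i j; fin_cases i <;> fin_cases j <;> simp

variable {ι σ δ} in
theorem triangularMap_ι_mul {S D : A →+ A} {r : R} {w : A} (hS : S (ι r * w) = ι (σ r) * w)
    (hD : D (ι r * w) = ι (δ r) * w) :
    triangularMap S D (ι r * w) = derivationMatrix ι σ δ hδ r * scalar (Fin 2) w := by
  ext i j
  fin_cases i <;> fin_cases j <;> simp [triangularMap, derivationMatrix_apply, hS, hD]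

theorem mul_and_derivation_of_triangularMap {S D : A →+ A}
    (h : ∀ f g, triangularMap S D (f * g) = triangularMap S D f * triangularMap S D g) :
    (∀ f g, S (f * g) = S f * S g) ∧ ∀ f g, D (f * g) = S f * D g + D f * g := by
  constructor <;> intro f g
  · simpa [triangularMap] using congrFun (congrFun (h f g) 0) 0
  · simpa [triangularMap] using congrFun (congrFun (h f g) 0) 1

end Matrix

end SkewPBW

theorem skew_pbw_two_vars_extended_delta_is_sigma_derivation_general
    {R A : Type*} [Ring R] [Ring A] (ι : R →+* A)
    (x₁ x₂ : A) (σ : Fin 2 → R ≃+* R) (δ : Fin 2 → R → R)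
    (hδadd : ∀ (i : Fin 2) (r s : R), δ i (r + s) = δ i r + δ i s)
    (hδmul : ∀ (i : Fin 2) (r s : R), δ i (r * s) = σ i r * δ i s + δ i r * s)
    (hcomm₁ : ∀ r : R, x₁ * ι r = ι (σ 0 r) * x₁ + ι (δ 0 r))
    (hcomm₂ : ∀ r : R, x₂ * ι r = ι (σ 1 r) * x₂ + ι (δ 1 r))
    (d r₀ r₁ r₂ : R)
    (hrel : x₂ * x₁ - ι d * (x₁ * x₂) = ι r₀ + ι r₁ * x₁ + ι r₂ * x₂)
    (hδδ : ∀ (i j : Fin 2) (r : R), δ i (δ j r) = δ j (δ i r))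
    (hδσ : ∀ (i j : Fin 2) (r : R), δ i (σ j r) = σ j (δ i r))
    (hσσ : ∀ (i j : Fin 2) (r : R), σ i (σ j r) = σ j (σ i r))
    (hδd : ∀ k : Fin 2, δ k d = 0)
    (hδr₀ : ∀ k : Fin 2, δ k r₀ = 0) (hδr₁ : ∀ k : Fin 2, δ k r₁ = 0)
    (hδr₂ : ∀ k : Fin 2, δ k r₂ = 0)
    (hσd : ∀ k : Fin 2, σ k d = d)
    (hσr₀ : ∀ k : Fin 2, σ k r₀ = r₀) (hσr₁ : ∀ k : Fin 2, σ k r₁ = r₁)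
    (hσr₂ : ∀ k : Fin 2, σ k r₂ = r₂)
    (hbasis : Function.Bijective fun f : ℕ × ℕ →₀ R =>
      f.sum fun ab c => ι c * (x₁ ^ ab.1 * x₂ ^ ab.2)) :
    ∀ i : Fin 2, ∃ (σt : A ≃+* A) (δt : A →+ A),
      (∀ (r : R) (a b : ℕ),
        σt (ι r * (x₁ ^ a * x₂ ^ b)) = ι (σ i r) * (x₁ ^ a * x₂ ^ b)) ∧
      (∀ (r : R) (a b : ℕ),
        δt (ι r * (x₁ ^ a * x₂ ^ b)) = ι (δ i r) * (x₁ ^ a * x₂ ^ b)) ∧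
      (∀ f g : A, δt (f * g) = σt f * δt g + δt f * g) := by
  intro i
  have hb : Function.Bijective (SkewPBW.monomialSum ι (SkewPBW.pbwMonomial x₁ x₂)) := by
    convert hbasis using 1
    exact funext (SkewPBW.monomialSum_apply ι _)
  let δi : R →+ R := AddMonoidHom.mk' (δ i) (hδadd i)
  let S := SkewPBW.coeffwiseEquiv hb (σ i).toAddEquiv
  let D := SkewPBW.coeffwiseMap hb δi
  have hS (r : R) (ab : ℕ × ℕ) := SkewPBW.coeffwiseEquiv_apply hb (σ i).toAddEquiv r ab
  have hD (r : R) (ab : ℕ × ℕ) := SkewPBW.coeffwiseMap_apply hb δi r ab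
  let θ := SkewPBW.derivationMatrix ι (σ i) δi (hδmul i)
  have hθ {c : R} (hσc : ∀ k, σ k c = c) (hδc : ∀ k, δ k c = 0) :
      θ c = Matrix.scalar (Fin 2) (ι c) :=
    SkewPBW.derivationMatrix_eq_scalar _ _ _ _ (hσc i) (hδc i)
  have hskew {j : Fin 2} {x : A} (hx : SkewPBW.SkewCommutes ι (σ j) (δ j) x) :=
    SkewPBW.skewCommutes_scalar ι (σ i) δi (hδmul i) hx (hσσ i j) (hδσ j i) (hδσ i j) (hδδ i j)
  have hmul := SkewPBW.map_mul_of_pbwRelations (Θ := SkewPBW.triangularMap S.toAddMonoidHom D)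
    hb.2 (fun r ab => by
      rw [SkewPBW.pbwMonomial_map]
      exact SkewPBW.triangularMap_ι_mul _ (hS r ab) (hD r ab))
    hcomm₁ (hskew hcomm₁) hcomm₂ (hskew hcomm₂) hrel
    (SkewPBW.PBWRelation.map hrel (Matrix.scalar (Fin 2)) (hθ hσd hδd) (hθ hσr₀ hδr₀)
      (hθ hσr₁ hδr₁) (hθ hσr₂ hδr₂))
  obtain ⟨hSmul, hDmul⟩ := SkewPBW.mul_and_derivation_of_triangularMap hmul
  exact ⟨{ S with map_mul' := hSmul }, D, fun r a b => hS r (a, b), fun r a b => hD r (a, b),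
    hDmul⟩

/-- Let `A` be a skew PBW extension of `R` in two variables of
automorphism type: `A` contains `R` as a subring (via the injective ring homomorphism
`ι` sharing the identity), `A` is free as a left `R`-module with basis the ordered
monomials `{x₁^a x₂^b : (a,b) ∈ ℕ²}`, for `i = 1, 2` there are ring automorphisms
`σᵢ` of `R` and `σᵢ`-derivations `δᵢ` with `xᵢ·r = σᵢ(r)·xᵢ + δᵢ(r)`, and there are
a nonzero `d ∈ R` and `r₀, r₁, r₂ ∈ R` with `x₂x₁ − d·x₁x₂ = r₀ + r₁x₁ + r₂x₂`;
assume all the compatibility conditions listed in the hypotheses (the `σ`'s and `δ`'s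
commute with each other, and the `δ`'s kill, and the `σ`'s fix, the structure
constants `d, r₀, r₁, r₂`).  Then for `i = 1, 2`, the unique additive map
`δ̃ᵢ : A → A` determined on the basis by `δ̃ᵢ(r·x₁^a x₂^b) = δᵢ(r)·x₁^a x₂^b`
is a `σ̃ᵢ`-derivation of `A`, i.e. `δ̃ᵢ(fg) = σ̃ᵢ(f)·δ̃ᵢ(g) + δ̃ᵢ(f)·g`, where `σ̃ᵢ`
is the ring automorphism of `A` determined by `σ̃ᵢ(r·x₁^a x₂^b) = σᵢ(r)·x₁^a x₂^b`. -/
theorem skew_pbw_two_vars_extended_delta_is_sigma_derivation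
    {R A : Type*} [Ring R] [Ring A] (ι : R →+* A) (hι : Function.Injective ι)
    (x₁ x₂ : A) (σ : Fin 2 → R ≃+* R) (δ : Fin 2 → R → R)
    (hδadd : ∀ (i : Fin 2) (r s : R), δ i (r + s) = δ i r + δ i s)
    (hδmul : ∀ (i : Fin 2) (r s : R), δ i (r * s) = σ i r * δ i s + δ i r * s)
    (hcomm₁ : ∀ r : R, x₁ * ι r = ι (σ 0 r) * x₁ + ι (δ 0 r))
    (hcomm₂ : ∀ r : R, x₂ * ι r = ι (σ 1 r) * x₂ + ι (δ 1 r))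
    (d r₀ r₁ r₂ : R) (hd : d ≠ 0)
    (hrel : x₂ * x₁ - ι d * (x₁ * x₂) = ι r₀ + ι r₁ * x₁ + ι r₂ * x₂)
    (hσδ : ∀ (i : Fin 2) (r : R), σ i (δ i r) = δ i (σ i r))
    (hδδ : ∀ (i j : Fin 2) (r : R), δ i (δ j r) = δ j (δ i r))
    (hδσ : ∀ (i j : Fin 2) (r : R), δ i (σ j r) = σ j (δ i r))
    (hσσ : ∀ (i j : Fin 2) (r : R), σ i (σ j r) = σ j (σ i r))
    (hδd : ∀ k : Fin 2, δ k d = 0)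
    (hδr₀ : ∀ k : Fin 2, δ k r₀ = 0) (hδr₁ : ∀ k : Fin 2, δ k r₁ = 0)
    (hδr₂ : ∀ k : Fin 2, δ k r₂ = 0)
    (hσd : ∀ k : Fin 2, σ k d = d)
    (hσr₀ : ∀ k : Fin 2, σ k r₀ = r₀) (hσr₁ : ∀ k : Fin 2, σ k r₁ = r₁)
    (hσr₂ : ∀ k : Fin 2, σ k r₂ = r₂)
    (hbasis : Function.Bijective fun f : ℕ × ℕ →₀ R =>
      f.sum fun ab c => ι c * (x₁ ^ ab.1 * x₂ ^ ab.2)) :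
    ∀ i : Fin 2, ∃ (σt : A ≃+* A) (δt : A →+ A),
      (∀ (r : R) (a b : ℕ),
        σt (ι r * (x₁ ^ a * x₂ ^ b)) = ι (σ i r) * (x₁ ^ a * x₂ ^ b)) ∧
      (∀ (r : R) (a b : ℕ),
        δt (ι r * (x₁ ^ a * x₂ ^ b)) = ι (δ i r) * (x₁ ^ a * x₂ ^ b)) ∧
      (∀ f g : A, δt (f * g) = σt f * δt g + δt f * g) :=
  skew_pbw_two_vars_extended_delta_is_sigma_derivation_general ι x₁ x₂ σ δ hδadd hδmul hcomm₁ hcomm₂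
    d r₀ r₁ r₂ hrel hδδ hδσ hσσ hδd hδr₀ hδr₁ hδr₂ hσd hσr₀ hσr₁ hσr₂ hbasis
end

section
/- For each 1 ≤ i ≤ n, the unique additive map δ̃_i : A → A determined on the left R-module basis by δ̃_i(r·x_1^{α_1}⋯x_n^{α_n}) = δ_i(r)·x_1^{α_1}⋯x_n^{α_n} for all r ∈ R and α ∈ ℕⁿ is a σ̃_i-derivation of A, i.e., δ̃_i(fg) = σ̃_i(f)·δ̃_i(g) + δ̃_i(f)·g for all f, g ∈ A, where σ̃_i : A → A is the ring automorphism determined by σ̃_i(r·x_1^{α_1}⋯x_n^{α_n}) = σ_i(r)·x_1^{α_1}⋯x_n^{α_n}. -/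
/-!
The matrices `Φ r = [[σᵢ r, δᵢ r], [0, r]]` form a ring homomorphism `R → M₂(A)` exactly because
`δᵢ` is a `σᵢ`-derivation, and together with the scalar matrices `xₖ` they satisfy the defining
relations of `A`; this is where `σᵢ, δᵢ` commuting with every `σₖ, δₖ` is used. The additive map
`a ↦ [[σ̃ᵢ a, δ̃ᵢ a], [0, a]]` sends `r x^α` to `Φ r · x^α`, so it is multiplicative by the
universal property of `A`, and its upper row says that `σ̃ᵢ` is multiplicative and `δ̃ᵢ` is a
`σ̃ᵢ`-derivation.

The universal property (an additive map sending `r x^α` to `Φ r X^α`, for a pair `(Φ, X)`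
satisfying the same relations, is multiplicative) comes from putting `x^β xₖ` in ordered form.
Since the structure constants are fixed by every `σₖ` and killed by every `δₖ`, they commute with
all monomials, so straightening `x^β xₖ` only produces constant multiples of monomials.
-/

namespace SkewPBW

section Monoid

variable {M N : Type*} [Monoid M] [Monoid N] {n : ℕ}

theorem prod_ofFn_update_mul : ∀ {n : ℕ} (f : Fin n → M) (k : Fin n) (y : M),
    (∀ j, k < j → f j = 1) →
      (List.ofFn (Function.update f k (f k * y))).prod = (List.ofFn f).prod * y
  | 0, _, k, _, _ => k.elim0
  | n + 1, f, k, y, h => by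
    induction k using Fin.cases with
    | zero =>
      have htail : ∀ i : Fin n, f i.succ = 1 := fun i => h _ i.succ_pos
      simp [List.ofFn_succ, htail]
    | succ j =>
      have hcomp : (fun i : Fin n => Function.update f j.succ (f j.succ * y) i.succ) =
          Function.update (fun i => f i.succ) j (f j.succ * y) := by
        funext i
        by_cases hi : i = j
        · subst hi; simp
        · simp [hi]
      rw [List.ofFn_succ, List.ofFn_succ, List.prod_cons, List.prod_cons, hcomp,
        Function.update_of_ne (Fin.succ_ne_zero j).symm,
        prod_ofFn_update_mul _ j y fun i hi => h i.succ (Fin.succ_lt_succ_iff.mpr hi), mul_assoc]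

def orderedMonomial (x : Fin n → M) (α : Fin n → ℕ) : M :=
  (List.ofFn fun i => x i ^ α i).prod

variable {x : Fin n → M}

@[simp]
theorem orderedMonomial_zero : orderedMonomial x 0 = 1 :=
  List.prod_eq_one (by simp)

theorem map_orderedMonomial {F : Type*} [FunLike F M N] [MonoidHomClass F M N] (f : F)
    (α : Fin n → ℕ) : f (orderedMonomial x α) = orderedMonomial (fun i => f (x i)) α := by
  simp [orderedMonomial, map_list_prod, List.map_ofFn, Function.comp_def]

theorem orderedMonomial_add_single {α : Fin n → ℕ} {k : Fin n} (h : ∀ j, k < j → α j = 0) :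
    orderedMonomial x (α + Pi.single k 1) = orderedMonomial x α * x k := by
  have hexp : (fun i => x i ^ (α + Pi.single k 1 : Fin n → ℕ) i) =
      Function.update (fun i => x i ^ α i) k (x k ^ α k * x k) := by
    funext i
    by_cases hi : i = k
    · subst hi; simp [pow_succ]
    · simp [hi]
  rw [orderedMonomial, hexp, prod_ofFn_update_mul _ _ _ fun j hj => by simp [h j hj]]
  rfl

theorem orderedMonomial_single (k : Fin n) : orderedMonomial x (Pi.single k 1) = x k := by
  simpa using orderedMonomial_add_single (x := x) (α := 0) (k := k) fun _ _ => rfl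

theorem orderedMonomial_mem_closure (α : Fin n → ℕ) :
    orderedMonomial x α ∈ Submonoid.closure (Set.range x) :=
  Submonoid.list_prod_mem _ (by
    simpa using fun i => pow_mem (Submonoid.subset_closure (Set.mem_range_self i)) _)

theorem Commute.orderedMonomial_right {a : M} (h : ∀ i, Commute a (x i)) (α : Fin n → ℕ) :
    Commute a (orderedMonomial x α) :=
  Commute.list_prod_right _ _ (by simpa using fun i => (h i).pow_right _)

end Monoid

theorem sum_add_single (β : Fin n → ℕ) (j : Fin n) :
    ∑ i, (β + Pi.single j 1 : Fin n → ℕ) i = ∑ i, β i + 1 := by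
  simp [Finset.sum_add_distrib]

theorem forall_lt_eq_zero_or_exists_eq_add_single (β : Fin n → ℕ) (k : Fin n) :
    (∀ j, k < j → β j = 0) ∨
      ∃ j, k < j ∧ ∃ β' : Fin n → ℕ, (∀ l, j < l → β' l = 0) ∧ β = β' + Pi.single j 1 := by
  by_cases h : ∀ j, k < j → β j = 0
  · exact Or.inl h
  push Not at h
  obtain ⟨j₀, hkj₀, hj₀⟩ := h
  obtain ⟨j, hj, hmax⟩ := Finset.exists_max_image
    (Finset.univ.filter fun l => k < l ∧ β l ≠ 0) id ⟨j₀, by simp [hkj₀, hj₀]⟩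
  simp only [Finset.mem_filter, Finset.mem_univ, true_and, id] at hj hmax
  refine Or.inr ⟨j, hj.1, β - Pi.single j 1, fun l hjl => ?_, ?_⟩
  · have : β l = 0 := by
      by_contra hl
      exact absurd (hmax l ⟨hj.1.trans hjl, hl⟩) (not_le.mpr hjl)
    simp [this]
  · funext l
    by_cases hl : l = j
    · subst hl; simp only [Pi.add_apply, Pi.sub_apply, Pi.single_eq_same]; omega
    · simp [hl]

section Ring

variable {R A B : Type*} [Ring R] [Ring A] [Ring B] {n : ℕ}

structure SatisfiesSkewPBWRelations (σ δ : Fin n → R → R) (d : Fin n → Fin n → R)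
    (c : Fin n → Fin n → Fin (n + 1) → R) (ι : R →+* A) (x : Fin n → A) : Prop where
  mul_map : ∀ i r, x i * ι r = ι (σ i r) * x i + ι (δ i r)
  mul_sub_mul : ∀ i j,
    x j * x i - ι (d i j) * (x i * x j) = ι (c i j 0) + ∑ k, ι (c i j k.succ) * x k

def IsSkewConstant (σ δ : Fin n → R → R) (s : R) : Prop :=
  ∀ k, σ k s = s ∧ δ k s = 0

theorem mul_eq_of_sub_eq {m a b e c₀ : A} {c y : Fin n → A}
    (h : a - e * b = c₀ + ∑ l, c l * y l) (he : Commute m e) (hc₀ : Commute m c₀)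
    (hc : ∀ l, Commute m (c l)) :
    m * a = c₀ * m + ∑ l, c l * (m * y l) + e * (m * b) := by
  rw [sub_eq_iff_eq_add.mp h, mul_add, mul_add, Finset.mul_sum, hc₀.eq, ← mul_assoc, he.eq,
    mul_assoc]
  simp only [← mul_assoc, (hc _).eq]

namespace SatisfiesSkewPBWRelations

variable {σ δ : Fin n → R → R} {d : Fin n → Fin n → R} {c : Fin n → Fin n → Fin (n + 1) → R}
  {ι : R →+* A} {x : Fin n → A}

theorem commute (h : SatisfiesSkewPBWRelations σ δ d c ι x) {s : R}
    (hs : IsSkewConstant σ δ s) (k : Fin n) : Commute (ι s) (x k) := by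
  have := h.mul_map k s
  rw [(hs k).1, (hs k).2, map_zero, add_zero] at this
  exact this.symm

theorem orderedMonomial_mul_mul (h : SatisfiesSkewPBWRelations σ δ d c ι x)
    (hd : ∀ i j, IsSkewConstant σ δ (d i j)) (hc : ∀ i j l, IsSkewConstant σ δ (c i j l))
    (β : Fin n → ℕ) (k j : Fin n) :
    orderedMonomial x β * (x j * x k) = ι (c k j 0) * orderedMonomial x β +
      ∑ l, ι (c k j l.succ) * (orderedMonomial x β * x l) +
        ι (d k j) * (orderedMonomial x β * (x k * x j)) :=
  have hcomm {s} (hs : IsSkewConstant σ δ s) : Commute (orderedMonomial x β) (ι s) :=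
    (Commute.orderedMonomial_right (h.commute hs) β).symm
  mul_eq_of_sub_eq (h.mul_sub_mul k j) (hcomm (hd k j)) (hcomm (hc k j 0))
    fun l => hcomm (hc k j l.succ)

end SatisfiesSkewPBWRelations

section UniversalProperty

variable {σ δ : Fin n → R → R} {d : Fin n → Fin n → R} {c : Fin n → Fin n → Fin (n + 1) → R}
  {ι : R →+* A} {x : Fin n → A} {Φ : R →+* B} {X : Fin n → B} {φ : A →+ B}

def degreeFiltration (ι : R →+* A) (x : Fin n → A) (N : ℕ) : AddSubmonoid A :=
  AddSubmonoid.closure {a | ∃ r α, ∑ i, α i ≤ N ∧ ι r * orderedMonomial x α = a}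

theorem monomial_mem_degreeFiltration {N : ℕ} {α : Fin n → ℕ} (hα : ∑ i, α i ≤ N) (r : R) :
    ι r * orderedMonomial x α ∈ degreeFiltration ι x N :=
  AddSubmonoid.subset_closure ⟨r, α, hα, rfl⟩

theorem degreeFiltration_mono : Monotone (degreeFiltration ι x) := fun _ _ hNM =>
  AddSubmonoid.closure_mono fun _ ⟨r, α, hα, ha⟩ => ⟨r, α, hα.trans hNM, ha⟩

theorem coeff_mul_mem_degreeFiltration {N : ℕ} (r : R) {a : A}
    (ha : a ∈ degreeFiltration ι x N) : ι r * a ∈ degreeFiltration ι x N := by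
  induction ha using AddSubmonoid.closure_induction with
  | mem a ha =>
    obtain ⟨s, α, hα, rfl⟩ := ha
    rw [← mul_assoc, ← map_mul]
    exact monomial_mem_degreeFiltration hα _
  | zero => simp
  | add a b _ _ ha hb => rw [mul_add]; exact add_mem ha hb

theorem orderedMonomial_mem_degreeFiltration {N : ℕ} {α : Fin n → ℕ} (hα : ∑ i, α i ≤ N) :
    orderedMonomial x α ∈ degreeFiltration ι x N := by
  simpa using monomial_mem_degreeFiltration (ι := ι) (x := x) hα 1

def MonomialsSpan (ι : R →+* A) (x : Fin n → A) : Prop :=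
  AddSubmonoid.closure {a | ∃ r α, ι r * orderedMonomial x α = a} = ⊤

theorem induction_on_monomials
    (hspan : MonomialsSpan ι x)
    {p : A → Prop} (zero : p 0) (add : ∀ a b, p a → p b → p (a + b))
    (monomial : ∀ r α, p (ι r * orderedMonomial x α)) (a : A) : p a := by
  have ha : a ∈ AddSubmonoid.closure {a | ∃ r α, ι r * orderedMonomial x α = a} :=
    hspan ▸ AddSubmonoid.mem_top a
  induction ha using AddSubmonoid.closure_induction with
  | mem a ha => obtain ⟨r, α, rfl⟩ := ha; exact monomial r α
  | zero => exact zero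
  | add a b _ _ ha hb => exact add a b ha hb

theorem map_coeff_mul
    (hspan : MonomialsSpan ι x)
    (hφ : ∀ r α, φ (ι r * orderedMonomial x α) = Φ r * orderedMonomial X α) (r : R) (a : A) :
    φ (ι r * a) = Φ r * φ a := by
  induction a using induction_on_monomials hspan with
  | zero => simp
  | add a b ha hb => rw [mul_add, map_add, map_add, ha, hb, mul_add]
  | monomial s α => rw [← mul_assoc, ← map_mul, hφ, hφ, map_mul, mul_assoc]

theorem mul_mem_degreeFiltration_and_map_mul
    (hA : SatisfiesSkewPBWRelations σ δ d c ι x) (hB : SatisfiesSkewPBWRelations σ δ d c Φ X)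
    (hd : ∀ i j, IsSkewConstant σ δ (d i j)) (hc : ∀ i j l, IsSkewConstant σ δ (c i j l))
    (hspan : MonomialsSpan ι x)
    (hφ : ∀ r α, φ (ι r * orderedMonomial x α) = Φ r * orderedMonomial X α)
    (N : ℕ) (k : Fin n) :
    ∀ a ∈ degreeFiltration ι x N,
      a * x k ∈ degreeFiltration ι x (N + 1) ∧ φ (a * x k) = φ a * X k := by
  have hφ₁ (α : Fin n → ℕ) : φ (orderedMonomial x α) = orderedMonomial X α := by
    simpa using hφ 1 α
  suffices hmon : ∀ β : Fin n → ℕ, ∑ i, β i ≤ N →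
      orderedMonomial x β * x k ∈ degreeFiltration ι x (N + 1) ∧
        φ (orderedMonomial x β * x k) = orderedMonomial X β * X k by
    intro a ha
    induction ha using AddSubmonoid.closure_induction with
    | mem a ha =>
      obtain ⟨r, β, hβ, rfl⟩ := ha
      obtain ⟨hmem, hmap⟩ := hmon β hβ
      rw [mul_assoc, map_coeff_mul hspan hφ, hmap, hφ, mul_assoc]
      exact ⟨coeff_mul_mem_degreeFiltration r hmem, rfl⟩
    | zero => simp
    | add a b _ _ ha hb =>
      rw [add_mul, map_add, map_add, ha.2, hb.2, add_mul]
      exact ⟨add_mem ha.1 hb.1, rfl⟩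
  intro β hβ
  rcases forall_lt_eq_zero_or_exists_eq_add_single β k with htrail | ⟨j, hkj, β, htrail, rfl⟩
  · rw [← orderedMonomial_add_single htrail, ← orderedMonomial_add_single htrail, hφ₁]
    exact ⟨orderedMonomial_mem_degreeFiltration (by rw [sum_add_single]; omega), rfl⟩
  have hβN : ∑ i, β i + 1 ≤ N := by rwa [sum_add_single] at hβ
  have hβmem : orderedMonomial x β ∈ degreeFiltration ι x (N - 1) :=
    orderedMonomial_mem_degreeFiltration (by omega)
  have hl := fun l => mul_mem_degreeFiltration_and_map_mul hA hB hd hc hspan hφ (N - 1) l _ hβmem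
  have hkj := mul_mem_degreeFiltration_and_map_mul hA hB hd hc hspan hφ N j _
    (degreeFiltration_mono (by omega) (hl k).1)
  rw [orderedMonomial_add_single htrail, orderedMonomial_add_single htrail, mul_assoc, mul_assoc,
    hA.orderedMonomial_mul_mul hd hc, hB.orderedMonomial_mul_mul hd hc, ← mul_assoc _ (x k),
    ← mul_assoc _ (X k)]
  refine ⟨add_mem (add_mem ?_ (sum_mem fun l _ => ?_)) ?_, ?_⟩
  · exact monomial_mem_degreeFiltration (by omega) _
  · exact degreeFiltration_mono (by omega) (coeff_mul_mem_degreeFiltration _ (hl l).1)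
  · exact coeff_mul_mem_degreeFiltration _ hkj.1
  · simp only [map_add, map_sum, map_coeff_mul hspan hφ, hφ₁, (hl _).2, hkj.2]
-- moving `x k` left past `x j` with `j > k` lowers the degree or raises the index
termination_by (N, n - k)
decreasing_by
  · exact Prod.Lex.left _ _ (by omega)
  · exact Prod.Lex.right _ (by have := j.isLt; have : k.val < j.val := hkj; omega)

theorem map_mul_generator
    (hA : SatisfiesSkewPBWRelations σ δ d c ι x) (hB : SatisfiesSkewPBWRelations σ δ d c Φ X)
    (hd : ∀ i j, IsSkewConstant σ δ (d i j)) (hc : ∀ i j l, IsSkewConstant σ δ (c i j l))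
    (hspan : MonomialsSpan ι x)
    (hφ : ∀ r α, φ (ι r * orderedMonomial x α) = Φ r * orderedMonomial X α) (a : A) (k : Fin n) :
    φ (a * x k) = φ a * X k := by
  induction a using induction_on_monomials hspan with
  | zero => simp
  | add a b ha hb => rw [add_mul, map_add, map_add, ha, hb, add_mul]
  | monomial r α => exact (mul_mem_degreeFiltration_and_map_mul hA hB hd hc hspan hφ _ k _
      (monomial_mem_degreeFiltration le_rfl r)).2

theorem map_mul_of_map_monomial
    (hA : SatisfiesSkewPBWRelations σ δ d c ι x) (hB : SatisfiesSkewPBWRelations σ δ d c Φ X)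
    (hd : ∀ i j, IsSkewConstant σ δ (d i j)) (hc : ∀ i j l, IsSkewConstant σ δ (c i j l))
    (hspan : MonomialsSpan ι x)
    (hφ : ∀ r α, φ (ι r * orderedMonomial x α) = Φ r * orderedMonomial X α) (a b : A) :
    φ (a * b) = φ a * φ b := by
  have hφ₁ (α : Fin n → ℕ) : φ (orderedMonomial x α) = orderedMonomial X α := by
    simpa using hφ 1 α
  have hφ1 : φ 1 = 1 := by simpa using hφ₁ 0
  have hφx (k : Fin n) : φ (x k) = X k := by
    rw [← orderedMonomial_single (x := x), hφ₁, orderedMonomial_single]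
  have hx := map_mul_generator hA hB hd hc hspan hφ
  have hmono {m : A} (hm : m ∈ Submonoid.closure (Set.range x)) (a : A) :
      φ (a * m) = φ a * φ m := by
    induction hm using Submonoid.closure_induction generalizing a with
    | mem _ hm => obtain ⟨k, rfl⟩ := hm; rw [hx, hφx]
    | one => rw [mul_one, hφ1, mul_one]
    | mul m m' _ _ hm hm' => rw [← mul_assoc, hm', hm, hm' m, mul_assoc]
  have hmonomap {m : A} (hm : m ∈ Submonoid.closure (Set.range x)) (s : R) :
      φ (m * ι s) = φ m * Φ s := by
    induction hm using Submonoid.closure_induction_right generalizing s with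
    | one => simpa [hφ1] using hφ s 0
    | mul_right m _ _ hk ih =>
      obtain ⟨k, rfl⟩ := hk
      rw [mul_assoc, hA.mul_map, mul_add, map_add, ← mul_assoc, hx, ih, ih, hx,
        mul_assoc (φ m) (X k), hB.mul_map, mul_add, mul_assoc]
  have hmap (a : A) (s : R) : φ (a * ι s) = φ a * Φ s := by
    induction a using induction_on_monomials hspan with
    | zero => simp
    | add a b ha hb => rw [add_mul, map_add, map_add, ha, hb, add_mul]
    | monomial r α => rw [mul_assoc, map_coeff_mul hspan hφ, map_coeff_mul hspan hφ,
        hmonomap (orderedMonomial_mem_closure α), mul_assoc]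
  induction b using induction_on_monomials hspan with
  | zero => simp
  | add b b' hb hb' => rw [mul_add, map_add, map_add, hb, hb', mul_add]
  | monomial s γ => rw [← mul_assoc, hmono (orderedMonomial_mem_closure γ), hmap,
      map_coeff_mul hspan hφ, mul_assoc]

end UniversalProperty

section Basis

variable {ι : R →+* A} {x : Fin n → A}

def IsMonomialBasis (ι : R →+* A) (x : Fin n → A) : Prop :=
  Function.Bijective fun f : (Fin n → ℕ) →₀ R => f.sum fun α r => ι r * orderedMonomial x α

noncomputable def basisAddEquiv (hbasis : IsMonomialBasis ι x) : ((Fin n → ℕ) →₀ R) ≃+ A :=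
  AddEquiv.ofBijective (Finsupp.liftAddHom fun α =>
    (AddMonoidHom.mulRight (orderedMonomial x α)).comp ι.toAddMonoidHom) hbasis

theorem basisAddEquiv_single (hbasis : IsMonomialBasis ι x) (r : R) (α : Fin n → ℕ) :
    basisAddEquiv hbasis (Finsupp.single α r) = ι r * orderedMonomial x α := by
  simp [basisAddEquiv]

theorem IsMonomialBasis.monomialsSpan (hbasis : IsMonomialBasis ι x) : MonomialsSpan ι x := by
  refine eq_top_iff.mpr fun a _ => ?_
  obtain ⟨f, rfl⟩ := hbasis.2 a
  exact sum_mem fun α _ => AddSubmonoid.subset_closure ⟨f α, α, rfl⟩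

noncomputable def coeffHom (hbasis : IsMonomialBasis ι x) (τ : R →+ R) : A →+ A :=
  ((basisAddEquiv hbasis).toAddMonoidHom.comp (Finsupp.mapRange.addMonoidHom τ)).comp
    (basisAddEquiv hbasis).symm.toAddMonoidHom

noncomputable def coeffEquiv (hbasis : IsMonomialBasis ι x) (τ : R ≃+ R) : A ≃+ A :=
  ((basisAddEquiv hbasis).symm.trans (Finsupp.mapRange.addEquiv τ)).trans (basisAddEquiv hbasis)

theorem coeffHom_monomial (hbasis : IsMonomialBasis ι x) (τ : R →+ R) (r : R)
    (α : Fin n → ℕ) :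
    coeffHom hbasis τ (ι r * orderedMonomial x α) = ι (τ r) * orderedMonomial x α := by
  simp [coeffHom, ← basisAddEquiv_single hbasis]

theorem coeffEquiv_monomial (hbasis : IsMonomialBasis ι x) (τ : R ≃+ R) (r : R)
    (α : Fin n → ℕ) :
    coeffEquiv hbasis τ (ι r * orderedMonomial x α) = ι (τ r) * orderedMonomial x α := by
  simp [coeffEquiv, ← basisAddEquiv_single hbasis]

end Basis

section UpperTriangular

open Matrix

def upperTriangularAddHom {M : Type*} [AddZeroClass M] (f D g : M →+ B) :
    M →+ Matrix (Fin 2) (Fin 2) B where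
  toFun a := !![f a, D a; 0, g a]
  map_zero' := by ext i j; fin_cases i <;> fin_cases j <;> simp
  map_add' a b := by ext i j; fin_cases i <;> fin_cases j <;> simp

@[simp]
theorem upperTriangularAddHom_apply {M : Type*} [AddZeroClass M] (f D g : M →+ B) (a : M) :
    upperTriangularAddHom f D g a = !![f a, D a; 0, g a] := rfl

def upperTriangularRingHom (f g : R →+* B) (D : R →+ B)
    (hD : ∀ r s, D (r * s) = f r * D s + D r * g s) : R →+* Matrix (Fin 2) (Fin 2) B :=
  { upperTriangularAddHom f.toAddMonoidHom D g.toAddMonoidHom with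
    map_one' := by
      have hD1 : D 1 = 0 := by simpa using hD 1 1
      simp [one_fin_two, hD1]
    map_mul' := fun r s => by simp [hD] }

theorem upperTriangularRingHom_apply (f g : R →+* B) (D : R →+ B)
    (hD : ∀ r s, D (r * s) = f r * D s + D r * g s) (r : R) :
    upperTriangularRingHom f g D hD r = !![f r, D r; 0, g r] := rfl

theorem scalar_fin_two (a : B) : scalar (Fin 2) a = !![a, 0; 0, a] :=
  diagonal_fin_two _

theorem SatisfiesSkewPBWRelations.upperTriangular {σ δ : Fin n → R → R}
    {d : Fin n → Fin n → R} {c : Fin n → Fin n → Fin (n + 1) → R} {ι : R →+* A} {x : Fin n → A}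
    (h : SatisfiesSkewPBWRelations σ δ d c ι x) {τ D : R → R}
    {Φ : R →+* Matrix (Fin 2) (Fin 2) A} (hΦ : ∀ r, Φ r = !![ι (τ r), ι (D r); 0, ι r])
    (hτσ : ∀ k r, σ k (τ r) = τ (σ k r)) (hτδ : ∀ k r, δ k (τ r) = τ (δ k r))
    (hDσ : ∀ k r, σ k (D r) = D (σ k r)) (hDδ : ∀ k r, δ k (D r) = D (δ k r))
    (hd : ∀ i j, τ (d i j) = d i j ∧ D (d i j) = 0)
    (hc : ∀ i j l, τ (c i j l) = c i j l ∧ D (c i j l) = 0) :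
    SatisfiesSkewPBWRelations σ δ d c Φ fun k => scalar (Fin 2) (x k) where
  mul_map k r := by
    rw [hΦ, hΦ, hΦ, scalar_fin_two, mul_fin_two, mul_fin_two]
    simp [h.mul_map, hτσ, hτδ, hDσ, hDδ]
  mul_sub_mul i j := by
    have hconst {s : R} (hs : τ s = s ∧ D s = 0) : Φ s = scalar (Fin 2) (ι s) := by
      rw [hΦ, hs.1, hs.2, map_zero, scalar_fin_two]
    simp only [hconst (hd i j), hconst (hc i j _)]
    simpa only [map_sub, map_add, map_mul, map_sum] using
      congrArg (scalar (Fin 2)) (h.mul_sub_mul i j)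

end UpperTriangular

end Ring

end SkewPBW

open SkewPBW

theorem skew_pbw_n_vars_extended_delta_is_sigma_derivation_general
    {R A : Type*} [Ring R] [Ring A] (n : ℕ) (ι : R →+* A)
    (x : Fin n → A) (σ : Fin n → R ≃+* R) (δ : Fin n → R → R)
    (hδadd : ∀ (i : Fin n) (r s : R), δ i (r + s) = δ i r + δ i s)
    (hδmul : ∀ (i : Fin n) (r s : R), δ i (r * s) = σ i r * δ i s + δ i r * s)
    (hcomm : ∀ (i : Fin n) (r : R), x i * ι r = ι (σ i r) * x i + ι (δ i r))
    (d : Fin n → Fin n → R)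
    (c : Fin n → Fin n → Fin (n + 1) → R)
    (hrel : ∀ i j, x j * x i - ι (d i j) * (x i * x j) =
      ι (c i j 0) + ∑ k : Fin n, ι (c i j k.succ) * x k)
    (hδδ : ∀ (i j : Fin n) (r : R), δ i (δ j r) = δ j (δ i r))
    (hδσ : ∀ (i j : Fin n) (r : R), δ i (σ j r) = σ j (δ i r))
    (hσσ : ∀ (i j : Fin n) (r : R), σ i (σ j r) = σ j (σ i r))
    (hδd : ∀ k i j, δ k (d i j) = 0)
    (hδc : ∀ (k i j : Fin n) (l : Fin (n + 1)), δ k (c i j l) = 0)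
    (hσd : ∀ k i j, σ k (d i j) = d i j)
    (hσc : ∀ (k i j : Fin n) (l : Fin (n + 1)), σ k (c i j l) = c i j l)
    (hbasis : Function.Bijective fun f : (Fin n → ℕ) →₀ R =>
      f.sum fun α r => ι r * (List.ofFn fun i => x i ^ α i).prod) :
    ∀ i : Fin n, ∃ (σt : A ≃+* A) (δt : A →+ A),
      (∀ (r : R) (α : Fin n → ℕ),
        σt (ι r * (List.ofFn fun i => x i ^ α i).prod) =
          ι (σ i r) * (List.ofFn fun i => x i ^ α i).prod) ∧
      (∀ (r : R) (α : Fin n → ℕ),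
        δt (ι r * (List.ofFn fun i => x i ^ α i).prod) =
          ι (δ i r) * (List.ofFn fun i => x i ^ α i).prod) ∧
      (∀ f g : A, δt (f * g) = σt f * δt g + δt f * g) := by
  intro i
  have hA : SatisfiesSkewPBWRelations (fun k => σ k) δ d c ι x := ⟨hcomm, hrel⟩
  let δi : R →+ R := AddMonoidHom.mk' (δ i) (hδadd i)
  let σt := coeffEquiv hbasis (σ i).toAddEquiv
  let δt := coeffHom hbasis δi
  let Φ := upperTriangularRingHom (ι.comp (σ i).toRingHom) ι (ι.toAddMonoidHom.comp δi)
    fun r s => by simp [δi, hδmul]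
  have hB := hA.upperTriangular (Φ := Φ) (fun _ => rfl) (fun k r => hσσ k i r)
    (fun k r => hδσ k i r) (fun k r => (hδσ i k r).symm) (fun k r => hδδ k i r)
    (fun a b => ⟨hσd i a b, hδd i a b⟩) (fun a b l => ⟨hσc i a b l, hδc i a b l⟩)
  have hmul := map_mul_of_map_monomial hA hB (fun a b k => ⟨hσd k a b, hδd k a b⟩)
    (fun a b l k => ⟨hσc k a b l, hδc k a b l⟩) (IsMonomialBasis.monomialsSpan hbasis)
    (φ := upperTriangularAddHom σt.toAddMonoidHom δt (AddMonoidHom.id A)) fun r α => by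
      rw [← map_orderedMonomial (Matrix.scalar (Fin 2)), scalar_fin_two,
        upperTriangularRingHom_apply, Matrix.mul_fin_two]
      simp only [upperTriangularAddHom_apply]
      simp [σt, δt, coeffEquiv_monomial hbasis, coeffHom_monomial hbasis, δi]
  refine ⟨{ σt with map_mul' := fun f g => by simpa using congr_fun₂ (hmul f g) 0 0 }, δt,
    coeffEquiv_monomial hbasis _, coeffHom_monomial hbasis _,
    fun f g => by simpa using congr_fun₂ (hmul f g) 0 1⟩

/-- **Statement 8.** Let `A` be a skew PBW extension of `R` in `n` variables of
automorphism type: `A` contains `R` as a subring (via the injective ring homomorphism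
`ι` sharing the identity), `A` is free as a left `R`-module with basis the ordered
monomials `{x^α = x₁^{α₁}⋯xₙ^{αₙ} : α ∈ ℕⁿ}`, for each `i` there are a ring
automorphism `σᵢ` of `R` and a `σᵢ`-derivation `δᵢ` with `xᵢ·r = σᵢ(r)·xᵢ + δᵢ(r)`,
and for all `i, j` there are a nonzero `d_{i,j} ∈ R` and elements
`c_{i,j,0}, …, c_{i,j,n} ∈ R` with
`x_j x_i − d_{i,j}·x_i x_j = c_{i,j,0} + Σ_{k=1}^{n} c_{i,j,k}·x_k`; assume all the
compatibility conditions listed in the hypotheses (the `σ`'s and `δ`'s commute with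
each other, and the `δ`'s kill, and the `σ`'s fix, the structure constants).  Then for
each `i`, the unique additive map `δ̃ᵢ : A → A` determined on the basis by
`δ̃ᵢ(r·x₁^{α₁}⋯xₙ^{αₙ}) = δᵢ(r)·x₁^{α₁}⋯xₙ^{αₙ}` is a `σ̃ᵢ`-derivation of `A`,
i.e. `δ̃ᵢ(fg) = σ̃ᵢ(f)·δ̃ᵢ(g) + δ̃ᵢ(f)·g` for all `f, g ∈ A`, where `σ̃ᵢ` is the ring
automorphism of `A` determined by `σ̃ᵢ(r·x^α) = σᵢ(r)·x^α`. -/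
theorem skew_pbw_n_vars_extended_delta_is_sigma_derivation
    {R A : Type*} [Ring R] [Ring A] (n : ℕ) (ι : R →+* A) (hι : Function.Injective ι)
    (x : Fin n → A) (σ : Fin n → R ≃+* R) (δ : Fin n → R → R)
    (hδadd : ∀ (i : Fin n) (r s : R), δ i (r + s) = δ i r + δ i s)
    (hδmul : ∀ (i : Fin n) (r s : R), δ i (r * s) = σ i r * δ i s + δ i r * s)
    (hcomm : ∀ (i : Fin n) (r : R), x i * ι r = ι (σ i r) * x i + ι (δ i r))
    (d : Fin n → Fin n → R) (hd : ∀ i j, d i j ≠ 0)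
    (c : Fin n → Fin n → Fin (n + 1) → R)
    (hrel : ∀ i j, x j * x i - ι (d i j) * (x i * x j) =
      ι (c i j 0) + ∑ k : Fin n, ι (c i j k.succ) * x k)
    (hσδ : ∀ (i : Fin n) (r : R), σ i (δ i r) = δ i (σ i r))
    (hδδ : ∀ (i j : Fin n) (r : R), δ i (δ j r) = δ j (δ i r))
    (hδσ : ∀ (i j : Fin n) (r : R), δ i (σ j r) = σ j (δ i r))
    (hσσ : ∀ (i j : Fin n) (r : R), σ i (σ j r) = σ j (σ i r))
    (hδd : ∀ k i j, δ k (d i j) = 0)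
    (hδc : ∀ (k i j : Fin n) (l : Fin (n + 1)), δ k (c i j l) = 0)
    (hσd : ∀ k i j, σ k (d i j) = d i j)
    (hσc : ∀ (k i j : Fin n) (l : Fin (n + 1)), σ k (c i j l) = c i j l)
    (hbasis : Function.Bijective fun f : (Fin n → ℕ) →₀ R =>
      f.sum fun α r => ι r * (List.ofFn fun i => x i ^ α i).prod) :
    ∀ i : Fin n, ∃ (σt : A ≃+* A) (δt : A →+ A),
      (∀ (r : R) (α : Fin n → ℕ),
        σt (ι r * (List.ofFn fun i => x i ^ α i).prod) =
          ι (σ i r) * (List.ofFn fun i => x i ^ α i).prod) ∧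
      (∀ (r : R) (α : Fin n → ℕ),
        δt (ι r * (List.ofFn fun i => x i ^ α i).prod) =
          ι (δ i r) * (List.ofFn fun i => x i ^ α i).prod) ∧
      (∀ f g : A, δt (f * g) = σt f * δt g + δt f * g) :=
  skew_pbw_n_vars_extended_delta_is_sigma_derivation_general n ι x σ δ hδadd hδmul hcomm d c hrel
    hδδ hδσ hσσ hδd hδc hσd hσc hbasis
end
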